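/- arXiv:math/0208247 — 12 statements merged into one kernel-verified Lean document; each statement's English description precedes it below -/
import Mathlib

section
/- For the Janet division on a finite set 𝒩 ⊂ ℕ^n (where index n is multiplicative for ν ∈ 𝒩 iff ν_n = max_{μ∈𝒩} μ_n, and index k < n is multiplicative for ν iff ν_k = max{μ_k : μ ∈ 𝒩, μ_i = ν_i for all i > k}), the involutive cones of any two distinct elements of 𝒩 are disjoint. In particular every finite set is involutively autoreduced with respect to the Janet division. -/
/-- Janet multiplicative indices of `ν` with respect to the finite set `𝒩`:
the index `k` is multiplicative for `ν ∈ 𝒩` iff `ν k` is maximal among the elements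
of `𝒩` agreeing with `ν` in all entries after `k`.  (For the last index the side
condition is vacuous.) -/
def JMult {n : ℕ} (𝒩 : Finset (Fin n → ℕ)) (ν : Fin n → ℕ) : Set (Fin n) :=
  {k | ∀ μ ∈ 𝒩, (∀ i, k < i → μ i = ν i) → μ k ≤ ν k}

/-- The Janet involutive cone of `ν` with respect to `𝒩`. -/
def JCone {n : ℕ} (𝒩 : Finset (Fin n → ℕ)) (ν : Fin n → ℕ) : Set (Fin n → ℕ) :=
  {μ | (∀ i, ν i ≤ μ i) ∧ ∀ i ∉ JMult 𝒩 ν, μ i = ν i}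

/-- The Janet involutive cones of two distinct elements of a finite set `𝒩 ⊂ ℕ^n`
are disjoint; in particular every finite set is involutively autoreduced with
respect to the Janet division. -/
theorem stmt1 {n : ℕ} (𝒩 : Finset (Fin n → ℕ)) (μ ν : Fin n → ℕ)
    (hμ : μ ∈ 𝒩) (hν : ν ∈ 𝒩) (hne : μ ≠ ν) :
    Disjoint (JCone 𝒩 μ) (JCone 𝒩 ν) := by
  rw [Set.disjoint_left]
  rintro ξ ⟨h1μ, h2μ⟩ ⟨h1ν, h2ν⟩
  have hS : (Finset.univ.filter (fun k => μ k ≠ ν k)).Nonempty := by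
    by_contra h
    rw [Finset.not_nonempty_iff_eq_empty, Finset.filter_eq_empty_iff] at h
    exact hne (funext fun i => not_not.mp (h (Finset.mem_univ i)))
  set k := (Finset.univ.filter (fun k => μ k ≠ ν k)).max' hS with hk
  have hkmem := (Finset.univ.filter (fun k => μ k ≠ ν k)).max'_mem hS
  rw [Finset.mem_filter] at hkmem
  have hagree : ∀ i, k < i → μ i = ν i := by
    intro i hi
    by_contra h
    exact absurd (Finset.le_max' _ i (by simp [h])) (not_le.mpr hi)
  have hk2 : μ k ≠ ν k := hkmem.2
  rcases lt_or_gt_of_ne hk2 with h | h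
  · have hnm : k ∉ JMult 𝒩 μ := fun hm => absurd (hm ν hν fun i hi => (hagree i hi).symm) (not_le.mpr h)
    have h3 := h2μ k hnm
    have h4 := h1ν k
    omega
  · have hnm : k ∉ JMult 𝒩 ν :=
      fun hm => absurd (hm μ hμ hagree) (not_le.mpr h)
    have h3 := h2ν k hnm
    have h4 := h1μ k
    omega
end

section
/- If 𝒩 ⊂ ℕ^n is a weakly involutive finite set for an involutive division L (i.e., the union of the involutive cones of elements of 𝒩 equals the monoid ideal generated by 𝒩), then there exists a subset 𝒩' ⊆ 𝒩 that is a strong involutive basis of the same monoid ideal, i.e., the involutive cones of the elements of 𝒩' (computed with respect to 𝒩') are pairwise disjoint and their union equals the monoid ideal generated by 𝒩. -/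
/-- The restricted cone of `ν` determined by a set `N` of multiplicative indices. -/
def rcone {n : ℕ} (N : Set (Fin n)) (ν : Fin n → ℕ) : Set (Fin n → ℕ) :=
  {μ | (∀ i, ν i ≤ μ i) ∧ ∀ i ∉ N, μ i = ν i}

/-- An involutive division on `ℕ^n`: an assignment of multiplicative indices to the
elements of every finite set, such that intersecting involutive cones are nested and
multiplicative indices do not shrink when passing to a subset. -/
structure InvDiv (n : ℕ) where
  mult : Finset (Fin n → ℕ) → (Fin n → ℕ) → Set (Fin n)
  nested : ∀ (𝒩 : Finset (Fin n → ℕ)), ∀ μ ∈ 𝒩, ∀ ν ∈ 𝒩,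
    (rcone (mult 𝒩 μ) μ ∩ rcone (mult 𝒩 ν) ν).Nonempty →
      rcone (mult 𝒩 μ) μ ⊆ rcone (mult 𝒩 ν) ν ∨
        rcone (mult 𝒩 ν) ν ⊆ rcone (mult 𝒩 μ) μ
  mono : ∀ (𝒩 𝒩' : Finset (Fin n → ℕ)), 𝒩' ⊆ 𝒩 → ∀ ν ∈ 𝒩', mult 𝒩 ν ⊆ mult 𝒩' ν

/-- The involutive cone of `ν ∈ 𝒩` with respect to the division `L`. -/
def InvDiv.cone {n : ℕ} (L : InvDiv n) (𝒩 : Finset (Fin n → ℕ)) (ν : Fin n → ℕ) :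
    Set (Fin n → ℕ) :=
  rcone (L.mult 𝒩 ν) ν

/-- The monoid ideal generated by a set of multi indices. -/
def mspan {n : ℕ} (𝒩 : Set (Fin n → ℕ)) : Set (Fin n → ℕ) :=
  {μ | ∃ ν ∈ 𝒩, ∀ i, ν i ≤ μ i}

/-- The involutive span of a finite set. -/
def invSpan {n : ℕ} (L : InvDiv n) (𝒩 : Finset (Fin n → ℕ)) : Set (Fin n → ℕ) :=
  ⋃ ν ∈ 𝒩, L.cone 𝒩 ν

lemma rcone_mono {n : ℕ} {N N' : Set (Fin n)} (h : N ⊆ N') (ν : Fin n → ℕ) :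
    rcone N ν ⊆ rcone N' ν := by
  rintro μ ⟨h1, h2⟩
  exact ⟨h1, fun i hi => h2 i (fun hN => hi (h hN))⟩

lemma erase_step {n : ℕ} (L : InvDiv n) (𝒩 A : Finset (Fin n → ℕ))
    (hAsub : A ⊆ 𝒩) (hAspan : invSpan L A = mspan ↑𝒩)
    {μ ν : Fin n → ℕ} (hμ : μ ∈ A) (hν : ν ∈ A) (hne : μ ≠ ν)
    (hsub : L.cone A μ ⊆ L.cone A ν) :
    invSpan L (A.erase μ) = mspan ↑𝒩 := by
  apply Set.Subset.antisymm
  · rintro x hx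
    simp only [invSpan, Set.mem_iUnion] at hx
    obtain ⟨ρ, hρ, hx⟩ := hx
    exact ⟨ρ, hAsub (Finset.mem_of_mem_erase hρ), hx.1⟩
  · rintro x hx
    rw [← hAspan] at hx
    simp only [invSpan, Set.mem_iUnion] at hx ⊢
    obtain ⟨ρ, hρ, hx⟩ := hx
    have key : ∀ τ ∈ A, τ ≠ μ → x ∈ L.cone A τ → ∃ τ' ∈ A.erase μ, x ∈ L.cone (A.erase μ) τ' := by
      intro τ hτ hτμ hxτ
      refine ⟨τ, Finset.mem_erase.mpr ⟨hτμ, hτ⟩, ?_⟩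
      exact rcone_mono (L.mono A (A.erase μ) (Finset.erase_subset _ _) τ
        (Finset.mem_erase.mpr ⟨hτμ, hτ⟩)) τ hxτ
    by_cases hρμ : ρ = μ
    · subst hρμ
      simpa using key ν hν (Ne.symm hne) (hsub hx)
    · simpa using key ρ hρ hρμ hx

/-- Every weakly involutive set contains a strong involutive basis of the monoid ideal
it generates: the involutive cones of the subset (with respect to the subset) are
pairwise disjoint and still cover the whole monoid ideal. -/
theorem stmt2 {n : ℕ} (L : InvDiv n) (𝒩 : Finset (Fin n → ℕ))
    (h : invSpan L 𝒩 = mspan ↑𝒩) :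
    ∃ 𝒩' ⊆ 𝒩, invSpan L 𝒩' = mspan ↑𝒩 ∧
      ∀ μ ∈ 𝒩', ∀ ν ∈ 𝒩', μ ≠ ν → Disjoint (L.cone 𝒩' μ) (L.cone 𝒩' ν) := by
  classical
  let T := 𝒩.powerset.filter (fun A => invSpan L A = mspan ↑𝒩)
  have hT : 𝒩 ∈ T := by simp [T, h]
  obtain ⟨A, hAT, hmin⟩ := T.exists_min_image Finset.card ⟨𝒩, hT⟩
  simp only [T, Finset.mem_filter, Finset.mem_powerset] at hAT
  obtain ⟨hAsub, hAspan⟩ := hAT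
  refine ⟨A, hAsub, hAspan, ?_⟩
  intro μ hμ ν hν hne
  by_contra hd
  rw [Set.not_disjoint_iff_nonempty_inter] at hd
  have hless : ∀ ρ σ : Fin n → ℕ, ρ ∈ A → σ ∈ A → ρ ≠ σ →
      L.cone A ρ ⊆ L.cone A σ → False := by
    intro ρ σ hρ hσ hne' hsub
    have hB : invSpan L (A.erase ρ) = mspan ↑𝒩 := erase_step L 𝒩 A hAsub hAspan hρ hσ hne' hsub
    have hBT : A.erase ρ ∈ T := by
      simp only [T, Finset.mem_filter, Finset.mem_powerset]
      exact ⟨(Finset.erase_subset _ _).trans hAsub, hB⟩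
    have := hmin _ hBT
    have hlt := Finset.card_erase_lt_of_mem hρ
    omega
  rcases L.nested A μ hμ ν hν hd with hs | hs
  · exact hless μ ν hμ hν hne hs
  · exact hless ν μ hν hμ (Ne.symm hne) hs
end

section
/- Let L be a globally defined involutive division on ℕ^n (the multiplicative indices of a multi index do not depend on the reference set). If a monoid ideal I ⊆ ℕ^n possesses a strong involutive basis for L, then this basis is unique. -/
/-- A finite set `𝒩` is a strong involutive basis of the monoid ideal `I` for the
globally defined division with multiplicative indices `mult`: `𝒩 ⊆ I`, the involutive
cones of the elements of `𝒩` cover `I`, and they are pairwise disjoint. -/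
def IsStrongBasis {n : ℕ} (mult : (Fin n → ℕ) → Set (Fin n))
    (I : Set (Fin n → ℕ)) (𝒩 : Finset (Fin n → ℕ)) : Prop :=
  (↑𝒩 : Set (Fin n → ℕ)) ⊆ I ∧
    (⋃ ν ∈ 𝒩, rcone (mult ν) ν) = I ∧
    ∀ μ ∈ 𝒩, ∀ ν ∈ 𝒩, μ ≠ ν → Disjoint (rcone (mult μ) μ) (rcone (mult ν) ν)

lemma self_mem_rcone {n : ℕ} (N : Set (Fin n)) (ν : Fin n → ℕ) : ν ∈ rcone N ν :=
  ⟨fun _ => le_rfl, fun _ _ => rfl⟩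

lemma eq_of_mem_rcone {n : ℕ} {N M : Set (Fin n)} {μ ν : Fin n → ℕ}
    (h1 : μ ∈ rcone N ν) (h2 : ν ∈ rcone M μ) : μ = ν :=
  funext fun i => le_antisymm (h2.1 i) (h1.1 i)

lemma mem_of_bases {n : ℕ} (mult : (Fin n → ℕ) → Set (Fin n))
    (hnest : ∀ μ ν : Fin n → ℕ, (rcone (mult μ) μ ∩ rcone (mult ν) ν).Nonempty →
      rcone (mult μ) μ ⊆ rcone (mult ν) ν ∨ rcone (mult ν) ν ⊆ rcone (mult μ) μ)
    (I : Set (Fin n → ℕ)) (𝒩₁ 𝒩₂ : Finset (Fin n → ℕ))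
    (h₁ : IsStrongBasis mult I 𝒩₁) (h₂ : IsStrongBasis mult I 𝒩₂) :
    ∀ ν ∈ 𝒩₁, ν ∈ 𝒩₂ := by
  obtain ⟨hsub₁, hcov₁, hdisj₁⟩ := h₁
  obtain ⟨hsub₂, hcov₂, hdisj₂⟩ := h₂
  intro ν hν
  have hνI : ν ∈ I := hsub₁ hν
  rw [← hcov₂] at hνI
  simp only [Set.mem_iUnion] at hνI
  obtain ⟨μ, hμ𝒩₂, hνμ⟩ := hνI
  rcases hnest ν μ ⟨ν, self_mem_rcone _ _, hνμ⟩ with hcase | hcase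
  · -- cone ν ⊆ cone μ
    have hμI : μ ∈ I := hsub₂ hμ𝒩₂
    rw [← hcov₁] at hμI
    simp only [Set.mem_iUnion] at hμI
    obtain ⟨ν', hν'𝒩₁, hμν'⟩ := hμI
    by_cases hvv : ν' = ν
    · subst hvv
      rwa [← eq_of_mem_rcone hμν' hνμ]
    · rcases hnest μ ν' ⟨μ, self_mem_rcone _ _, hμν'⟩ with hc2 | hc2
      · exact absurd (Set.disjoint_left.mp (hdisj₁ ν hν ν' hν'𝒩₁ (Ne.symm hvv))
          (self_mem_rcone _ _) (hc2 (hcase (self_mem_rcone _ _)))) (fun h => h)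
      · have : μ = ν' := eq_of_mem_rcone hμν' (hc2 (self_mem_rcone _ _))
        subst this
        exact absurd (Set.disjoint_left.mp (hdisj₁ ν hν μ hν'𝒩₁ (Ne.symm hvv))
          (self_mem_rcone _ _) hνμ) (fun h => h)
  · -- cone μ ⊆ cone ν
    rwa [eq_of_mem_rcone hνμ (hcase (self_mem_rcone _ _))]

/-- For a globally defined involutive division (the multiplicative indices of a multi
index do not depend on the reference set; intersecting cones are nested), a strong
involutive basis of a monoid ideal is unique if it exists. -/
theorem stmt3 {n : ℕ} (mult : (Fin n → ℕ) → Set (Fin n))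
    (hnest : ∀ μ ν : Fin n → ℕ, (rcone (mult μ) μ ∩ rcone (mult ν) ν).Nonempty →
      rcone (mult μ) μ ⊆ rcone (mult ν) ν ∨ rcone (mult ν) ν ⊆ rcone (mult μ) μ)
    (I : Set (Fin n → ℕ)) (hI : ∀ μ ∈ I, ∀ σ : Fin n → ℕ, μ + σ ∈ I)
    (𝒩₁ 𝒩₂ : Finset (Fin n → ℕ))
    (h₁ : IsStrongBasis mult I 𝒩₁) (h₂ : IsStrongBasis mult I 𝒩₂) :
    𝒩₁ = 𝒩₂ := by
  ext ν
  exact ⟨fun h => mem_of_bases mult hnest I 𝒩₁ 𝒩₂ h₁ h₂ ν h,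
         fun h => mem_of_bases mult hnest I 𝒩₂ 𝒩₁ h₂ h₁ ν h⟩
end

section
/- The Janet division is Noetherian: every finite set 𝒩 ⊂ ℕ^n has a finite Janet completion. Explicitly, let μ be the componentwise maximum of the elements of 𝒩 and let 𝒩̄ = {ν̄ ∈ ⟨𝒩⟩ : μ ∈ ν̄ + ℕ^n}. Then 𝒩̄ is a finite set containing 𝒩, contained in the monoid ideal ⟨𝒩⟩ generated by 𝒩, and the union of the Janet involutive cones of the elements of 𝒩̄ equals ⟨𝒩⟩. -/
/-- Janet multiplicative indices of `ν` with respect to a (possibly infinite) set `𝒩`. -/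
def JMultS {n : ℕ} (𝒩 : Set (Fin n → ℕ)) (ν : Fin n → ℕ) : Set (Fin n) :=
  {k | ∀ μ ∈ 𝒩, (∀ i, k < i → μ i = ν i) → μ k ≤ ν k}

/-- The Janet involutive cone of `ν` with respect to `𝒩`. -/
def JConeS {n : ℕ} (𝒩 : Set (Fin n → ℕ)) (ν : Fin n → ℕ) : Set (Fin n → ℕ) :=
  {μ | (∀ i, ν i ≤ μ i) ∧ ∀ i ∉ JMultS 𝒩 ν, μ i = ν i}

/-- The Janet division is Noetherian: for a finite set `𝒩 ⊂ ℕ^n` let `μmax` be the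
componentwise maximum of its elements and `𝒩̄` the set of all elements of the monoid
ideal `⟨𝒩⟩` dividing `μmax`.  Then `𝒩̄` is a finite Janet completion of `𝒩`: it
contains `𝒩`, is contained in `⟨𝒩⟩`, and its Janet involutive cones cover `⟨𝒩⟩`. -/
theorem stmt4 {n : ℕ} (𝒩 : Finset (Fin n → ℕ)) :
    let μmax : Fin n → ℕ := fun i => 𝒩.sup (fun ν => ν i)
    let Nbar : Set (Fin n → ℕ) := {ν | ν ∈ mspan ↑𝒩 ∧ ∀ i, ν i ≤ μmax i}
    Nbar.Finite ∧ (↑𝒩 : Set (Fin n → ℕ)) ⊆ Nbar ∧ Nbar ⊆ mspan ↑𝒩 ∧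
      (⋃ ν ∈ Nbar, JConeS Nbar ν) = mspan ↑𝒩 := by
  intro μmax Nbar
  have hfin : Nbar.Finite := by
    apply Set.Finite.subset (Set.Finite.pi (fun i : Fin n => Set.finite_Iic (μmax i)))
    intro ν hν
    simp only [Set.mem_pi, Set.mem_univ, Set.mem_Iic, forall_true_left]
    exact fun i => hν.2 i
  have hsub : (↑𝒩 : Set (Fin n → ℕ)) ⊆ Nbar := fun ν hν =>
    ⟨⟨ν, hν, fun i => le_rfl⟩, fun i => Finset.le_sup (f := fun ν => ν i) hν⟩
  refine ⟨hfin, hsub, fun ν hν => hν.1, ?_⟩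
  apply Set.Subset.antisymm
  · intro μ hμ
    obtain ⟨ν, hν, hle, -⟩ := Set.mem_iUnion₂.mp hμ
    obtain ⟨τ, hτ, hτν⟩ := hν.1
    exact ⟨τ, hτ, fun i => (hτν i).trans (hle i)⟩
  · intro μ hμ
    obtain ⟨σ, hσ, hσμ⟩ := hμ
    set S : Set (Fin n → ℕ) := {ν | ν ∈ Nbar ∧ ∀ i, ν i ≤ μ i} with hS
    have hSfin : S.Finite := hfin.subset fun ν h => h.1
    have hSne : hSfin.toFinset.Nonempty :=
      ⟨σ, hSfin.mem_toFinset.mpr ⟨hsub hσ, hσμ⟩⟩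
    obtain ⟨ν, hνS, hmax⟩ := hSfin.toFinset.exists_max_image (fun ν => ∑ j, ν j) hSne
    rw [Set.Finite.mem_toFinset] at hνS
    refine Set.mem_iUnion₂.mpr ⟨ν, hνS.1, hνS.2, ?_⟩
    intro i hi
    by_contra hne
    have hlt : ν i < μ i := lt_of_le_of_ne (hνS.2 i) (Ne.symm hne)
    apply hi
    intro ρ hρ hρν
    by_contra hρi
    push_neg at hρi
    have hν'S : Function.update ν i (ν i + 1) ∈ S := by
      refine ⟨⟨?_, ?_⟩, ?_⟩
      · obtain ⟨τ, hτ, hτν⟩ := hνS.1.1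
        refine ⟨τ, hτ, fun j => (hτν j).trans ?_⟩
        rcases eq_or_ne j i with h | h
        · subst h; simp
        · simp [Function.update_of_ne h]
      · intro j
        rcases eq_or_ne j i with h | h
        · subst h; simp only [Function.update_self]
          exact le_trans hρi (hρ.2 j)
        · simpa [Function.update_of_ne h] using hνS.1.2 j
      · intro j
        rcases eq_or_ne j i with h | h
        · subst h; simp only [Function.update_self]; omega
        · simpa [Function.update_of_ne h] using hνS.2 j
    have hle := hmax _ (hSfin.mem_toFinset.mpr hν'S)
    rw [Finset.sum_update_of_mem (Finset.mem_univ i), Finset.sdiff_singleton_eq_erase] at hle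
    have h2 : ∑ j, ν j = ν i + ∑ j ∈ Finset.univ.erase i, ν j :=
      (Finset.add_sum_erase _ _ (Finset.mem_univ i)).symm
    omega
end

section
/- Let I ⊆ ℕ^n be the irreducible monoid ideal minimally generated by {ℓ_1·e_{i_1}, ..., ℓ_k·e_{i_k}} with 1 ≤ i_1 < ⋯ < i_k ≤ n and all ℓ_j > 0, where e_i denotes the i-th standard basis multi index. Then I possesses a finite Pommaret basis if and only if there are no gaps in the index sequence, i.e., i_k = n and i_1 = n−k+1. -/
/-- The Pommaret multiplicative indices of a multi index. -/
def PMult {n : ℕ} (ν : Fin n → ℕ) : Set (Fin n) := {i | ∀ j < i, ν j = 0}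

/-- The Pommaret involutive cone of a multi index. -/
def PCone {n : ℕ} (ν : Fin n → ℕ) : Set (Fin n → ℕ) :=
  {μ | (∀ i, ν i ≤ μ i) ∧ ∀ i ∉ PMult ν, μ i = ν i}

private lemma sm_step {k n : ℕ} {idx : Fin k → Fin n} (hmono : StrictMono idx) :
    ∀ d (a b : Fin k), (b : ℕ) = (a : ℕ) + d → (idx a : ℕ) + d ≤ (idx b : ℕ) := by
  intro d
  induction d with
  | zero =>
    intro a b h
    have : a = b := Fin.ext (by omega)
    subst this; omega
  | succ d ih =>
    intro a b h
    have hb : (a : ℕ) + d < k := by have := b.isLt; omega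
    have h1 := ih a ⟨(a : ℕ) + d, hb⟩ rfl
    have h2 : idx ⟨(a : ℕ) + d, hb⟩ < idx b := hmono (by rw [Fin.lt_def]; simp; omega)
    have h3 := Fin.lt_def.mp h2
    omega

/-- Let `I` be the irreducible monoid ideal minimally generated by
`ℓ_1·e_{i_1}, …, ℓ_k·e_{i_k}` with `i_1 < ⋯ < i_k` and all `ℓ_j > 0`; thus
`I = {μ | ∃ j, ℓ_j ≤ μ_{i_j}}`.  Then `I` possesses a finite Pommaret basis iff there
are no gaps in the index sequence, i.e. (in 0-indexed form) `i_k = n-1` and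
`i_1 = n-k`. -/
theorem stmt5 {n k : ℕ} (hk : 0 < k) (hkn : k ≤ n)
    (idx : Fin k → Fin n) (hmono : StrictMono idx)
    (ℓ : Fin k → ℕ) (hℓ : ∀ j, 0 < ℓ j) :
    (∃ 𝒩 : Finset (Fin n → ℕ),
        (↑𝒩 : Set (Fin n → ℕ)) ⊆ {μ : Fin n → ℕ | ∃ j, ℓ j ≤ μ (idx j)} ∧
        (⋃ ν ∈ 𝒩, PCone ν) = {μ : Fin n → ℕ | ∃ j, ℓ j ≤ μ (idx j)}) ↔
      ((idx ⟨k - 1, by omega⟩ : ℕ) = n - 1 ∧ (idx ⟨0, hk⟩ : ℕ) = n - k) := by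
  classical
  have hkn1 : k - 1 < k := by omega
  have hend : (idx ⟨k - 1, hkn1⟩ : ℕ) ≤ n - 1 := by
    have := (idx ⟨k - 1, hkn1⟩).isLt; omega
  have hspan : (idx ⟨0, hk⟩ : ℕ) + (k - 1) ≤ (idx ⟨k - 1, hkn1⟩ : ℕ) :=
    sm_step hmono (k - 1) ⟨0, hk⟩ ⟨k - 1, hkn1⟩ (by simp)
  have h0le : (idx ⟨0, hk⟩ : ℕ) ≤ n - k := by omega
  constructor
  · rintro ⟨𝒩, hsub, hcover⟩
    -- it suffices to show idx 0 = n - k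
    suffices h0 : (idx ⟨0, hk⟩ : ℕ) = n - k by
      exact ⟨by omega, h0⟩
    by_contra hcon
    have h0lt : (idx ⟨0, hk⟩ : ℕ) < n - k := by omega
    set i0 : Fin n := idx ⟨0, hk⟩ with hi0
    -- find a gap index g
    obtain ⟨g, hgt, hgns⟩ :
        ∃ g ∈ Finset.Ioi i0, g ∉ Finset.image idx (Finset.univ.erase ⟨0, hk⟩) := by
      by_contra hc
      push_neg at hc
      have hsubt : Finset.Ioi i0 ⊆ Finset.image idx (Finset.univ.erase ⟨0, hk⟩) := hc
      have hc1 := Finset.card_le_card hsubt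
      have hc2 : (Finset.image idx (Finset.univ.erase ⟨0, hk⟩)).card ≤ k - 1 := by
        calc (Finset.image idx (Finset.univ.erase ⟨0, hk⟩)).card
            ≤ (Finset.univ.erase (⟨0, hk⟩ : Fin k)).card := Finset.card_image_le
          _ = k - 1 := by rw [Finset.card_erase_of_mem (Finset.mem_univ _)]; simp
      rw [Fin.card_Ioi] at hc1
      omega
    have hg1 : (i0 : ℕ) < (g : ℕ) := Fin.lt_def.mp (Finset.mem_Ioi.mp hgt)
    have hg2 : ∀ j : Fin k, idx j ≠ g := by
      intro j hj
      by_cases hj0 : j = ⟨0, hk⟩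
      · subst hj0; rw [← hi0] at hj; omega
      · exact hgns (Finset.mem_image.mpr ⟨j, Finset.mem_erase.mpr ⟨hj0, Finset.mem_univ _⟩, hj⟩)
    -- family of monomials
    have key : ∀ t : ℕ, ∃ ν ∈ (↑𝒩 : Set (Fin n → ℕ)), ν g = t + 1 := by
      intro t
      set μt : Fin n → ℕ := fun i => if i = i0 then ℓ ⟨0, hk⟩ else if i = g then t + 1 else 0
        with hμt
      have hmem : μt ∈ {μ : Fin n → ℕ | ∃ j, ℓ j ≤ μ (idx j)} := by
        refine ⟨⟨0, hk⟩, ?_⟩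
        simp [hμt, ← hi0]
      rw [← hcover] at hmem
      obtain ⟨ν, hν𝒩, hνle, hνeq⟩ := Set.mem_iUnion₂.mp hmem
      refine ⟨ν, hν𝒩, ?_⟩
      -- ν i0 ≠ 0
      obtain ⟨j, hjν⟩ := hsub hν𝒩
      have hjg : idx j ≠ g := hg2 j
      have hμtj : 0 < μt (idx j) := lt_of_lt_of_le (lt_of_lt_of_le (hℓ j) hjν) (hνle (idx j))
      have hji0 : idx j = i0 := by
        by_contra hne
        simp [hμt, hne, hjg] at hμtj
      have hνi0 : ν i0 ≠ 0 := by
        rw [hji0] at hjν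
        have := hℓ j; omega
      have hgnm : g ∉ PMult ν := by
        intro hpm
        exact hνi0 (hpm i0 (Fin.lt_def.mpr hg1))
      have := hνeq g hgnm
      have hgi0 : g ≠ i0 := by intro h; rw [h] at hg1; omega
      simp [hμt, hgi0] at this
      omega
    choose f hf1 hf2 using key
    have hinj : Function.Injective f := by
      intro a b hab
      have : f a g = f b g := by rw [hab]
      rw [hf2 a, hf2 b] at this
      omega
    exact (Set.infinite_of_injective_forall_mem hinj hf1) 𝒩.finite_toSet
  · rintro ⟨hlast, h0⟩
    have hj : ∀ j : Fin k, (idx j : ℕ) = n - k + (j : ℕ) := by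
      intro j
      have l1 : (idx ⟨0, hk⟩ : ℕ) + (j : ℕ) ≤ (idx j : ℕ) :=
        sm_step hmono (j : ℕ) ⟨0, hk⟩ j (by simp)
      have l2 : (idx j : ℕ) + (k - 1 - (j : ℕ)) ≤ (idx ⟨k - 1, hkn1⟩ : ℕ) :=
        sm_step hmono (k - 1 - (j : ℕ)) j ⟨k - 1, hkn1⟩ (by simp; have := j.isLt; omega)
      have := j.isLt
      omega
    set M := Finset.univ.sup ℓ with hM
    have hMle : ∀ j, ℓ j ≤ M := fun j => Finset.le_sup (Finset.mem_univ j)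
    set P : (Fin n → ℕ) → Prop := fun ν => ∃ j : Fin k, ν (idx j) = ℓ j ∧
        (∀ i : Fin n, (i : ℕ) < (idx j : ℕ) → ν i = 0) ∧
        (∀ j' : Fin k, j < j' → ν (idx j') < ℓ j') with hP
    refine ⟨(Fintype.piFinset fun _ : Fin n => Finset.range (M + 1)).filter P, ?_, ?_⟩
    · intro ν hν
      obtain ⟨j, hj1, _, _⟩ := (Finset.mem_filter.mp hν).2
      exact ⟨j, le_of_eq hj1.symm⟩
    · ext μ
      constructor
      · intro hμ
        obtain ⟨ν, hν𝒩, hνle, hνeq⟩ := Set.mem_iUnion₂.mp hμ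
        obtain ⟨j, hj1, _, _⟩ := (Finset.mem_filter.mp hν𝒩).2
        exact ⟨j, hj1 ▸ hνle (idx j)⟩
      · rintro ⟨j₀, hj₀⟩
        set S : Finset (Fin k) := Finset.univ.filter (fun j => ℓ j ≤ μ (idx j)) with hS
        have hSne : S.Nonempty := ⟨j₀, Finset.mem_filter.mpr ⟨Finset.mem_univ _, hj₀⟩⟩
        set j := S.max' hSne with hjdef
        have hjS : ℓ j ≤ μ (idx j) :=
          (Finset.mem_filter.mp (S.max'_mem hSne)).2
        have hmax : ∀ j' : Fin k, ℓ j' ≤ μ (idx j') → j' ≤ j := fun j' h =>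
          S.le_max' j' (Finset.mem_filter.mpr ⟨Finset.mem_univ _, h⟩)
        set ν : Fin n → ℕ := fun i =>
          if (i : ℕ) < (idx j : ℕ) then 0
          else if (i : ℕ) = (idx j : ℕ) then ℓ j else μ i with hν
        have hup : ∀ i : Fin n, (idx j : ℕ) < (i : ℕ) →
            ∃ j' : Fin k, j < j' ∧ idx j' = i ∧ μ i < ℓ j' := by
          intro i hi
          have hij := hj j
          have hik : (i : ℕ) - (n - k) < k := by have := i.isLt; omega
          have hidx : idx ⟨(i : ℕ) - (n - k), hik⟩ = i := by
            apply Fin.ext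
            rw [hj]
            simp
            omega
          have hgt : j < (⟨(i : ℕ) - (n - k), hik⟩ : Fin k) := by
            rw [Fin.lt_def]
            simp
            omega
          refine ⟨⟨(i : ℕ) - (n - k), hik⟩, hgt, hidx, ?_⟩
          by_contra hcon
          push_neg at hcon
          have := hmax _ (by rw [hidx]; exact hcon)
          exact absurd this (not_le_of_gt hgt)
        have hνval : ∀ i : Fin n, (idx j : ℕ) < (i : ℕ) → ν i = μ i := by
          intro i hi
          simp only [hν]
          rw [if_neg (by omega), if_neg (by omega)]
        refine Set.mem_iUnion₂.mpr ⟨ν, ?_, ?_, ?_⟩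
        · rw [Finset.mem_filter]
          constructor
          · rw [Fintype.mem_piFinset]
            intro i
            rw [Finset.mem_range]
            rcases lt_trichotomy ((i : ℕ)) ((idx j : ℕ)) with h | h | h
            · simp only [hν]; rw [if_pos h]; omega
            · simp only [hν]; rw [if_neg (by omega), if_pos h]
              have := hMle j; omega
            · rw [hνval i h]
              obtain ⟨j', _, _, hlt⟩ := hup i h
              have := hMle j'; omega
          · refine ⟨j, ?_, ?_, ?_⟩
            · simp [hν]
            · intro i hi; simp only [hν]; rw [if_pos hi]
            · intro j' hj'
              have hlt : (idx j : ℕ) < (idx j' : ℕ) := Fin.lt_def.mp (hmono hj')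
              rw [hνval _ hlt]
              obtain ⟨j'', _, heq, hltμ⟩ := hup (idx j') hlt
              rwa [hmono.injective heq] at hltμ
        · intro i
          rcases lt_trichotomy ((i : ℕ)) ((idx j : ℕ)) with h | h | h
          · simp only [hν]; rw [if_pos h]; omega
          · have hieq : i = idx j := Fin.ext h
            simp only [hν]; rw [if_neg (by omega), if_pos h, hieq]
            exact hjS
          · rw [hνval i h]
        · intro i hi
          simp only [PMult, Set.mem_setOf_eq] at hi
          push_neg at hi
          obtain ⟨i', hi'lt, hi'ne⟩ := hi
          have h1 : (idx j : ℕ) ≤ (i' : ℕ) := by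
            by_contra hc
            push_neg at hc
            apply hi'ne
            simp only [hν]; rw [if_pos hc]
          have h2 : (idx j : ℕ) < (i : ℕ) := lt_of_le_of_lt h1 (Fin.lt_def.mp hi'lt)
          exact (hνval i h2).symm
end

section
/- The monoid ideal generated by the single multi index (1,1) ∈ ℕ² has no finite Pommaret basis: any set of multi indices whose Pommaret cones cover the ideal (1,1)+ℕ² must contain all multi indices (1,k) for k ≥ 1, hence is infinite. -/
lemma key (S : Set (Fin 2 → ℕ))
    (hS : S ⊆ {μ : Fin 2 → ℕ | ∀ i, 1 ≤ μ i})
    (hcov : {μ : Fin 2 → ℕ | ∀ i, 1 ≤ μ i} ⊆ ⋃ ν ∈ S, PCone ν) :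
    ∀ m : ℕ, 1 ≤ m → (fun i : Fin 2 => if i = 0 then 1 else m) ∈ S := by
  intro m hm
  set μ : Fin 2 → ℕ := fun i => if i = 0 then 1 else m with hμ
  have hμmem : μ ∈ {μ : Fin 2 → ℕ | ∀ i, 1 ≤ μ i} := by
    intro i
    fin_cases i <;> simp [μ, hm]
  obtain ⟨ν, hνS, hν⟩ := Set.mem_iUnion₂.mp (hcov hμmem)
  obtain ⟨hle, heq⟩ := hν
  have hν0 : ν 0 = 1 := le_antisymm (by simpa [μ] using hle 0) (hS hνS 0)
  have h1 : (1 : Fin 2) ∉ PMult ν := by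
    intro h
    have := h 0 (by decide)
    omega
  have hν1 : μ 1 = ν 1 := heq 1 h1
  have : ν = μ := by
    funext i
    fin_cases i
    · simpa [μ] using hν0
    · simpa [μ] using hν1.symm
  rwa [← this]

/-- The monoid ideal `(1,1) + ℕ² = {μ | μ₀ ≥ 1 ∧ μ₁ ≥ 1}` has no finite Pommaret
basis: any subset of the ideal whose Pommaret cones cover it must contain all multi
indices `(1,m)` with `m ≥ 1`, hence is infinite. -/
theorem stmt6 (S : Set (Fin 2 → ℕ))
    (hS : S ⊆ {μ : Fin 2 → ℕ | ∀ i, 1 ≤ μ i})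
    (hcov : {μ : Fin 2 → ℕ | ∀ i, 1 ≤ μ i} ⊆ ⋃ ν ∈ S, PCone ν) :
    (∀ m : ℕ, 1 ≤ m → (fun i : Fin 2 => if i = 0 then 1 else m) ∈ S) ∧
      S.Infinite := by
  refine ⟨key S hS hcov, ?_⟩
  apply Set.infinite_of_injective_forall_mem
    (f := fun m : ℕ => (fun i : Fin 2 => if i = 0 then 1 else m + 1))
  · intro a b hab
    have := congrFun hab 1
    simpa using this
  · intro m
    exact key S hS hcov (m + 1) (by omega)
end

section
/- The Janet division is continuous: for any finite set 𝒩 ⊂ ℕ^n and any finite sequence (ν^{(1)},...,ν^{(t)}) of elements of 𝒩 such that for each k < t there is a Janet-non-multiplicative index j_k of ν^{(k)} with ν^{(k+1)} Janet-involutively dividing ν^{(k)} + e_{j_k}, the sequence is strictly increasing with respect to the lexicographic order (with the last position most significant and negative last nonvanishing difference meaning smaller); in particular all elements of the sequence are distinct. -/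
/-- The lexicographic order used here: `μ ≺_lex ν` iff the last nonvanishing entry of
`μ - ν` is negative, i.e. there is an index `i` with `μ i < ν i` and `μ j = ν j` for
all `j > i`. -/
def ltLex {n : ℕ} (μ ν : Fin n → ℕ) : Prop :=
  ∃ i : Fin n, μ i < ν i ∧ ∀ j, i < j → μ j = ν j

lemma step_key {n : ℕ} (𝒩 : Finset (Fin n → ℕ)) (ν₁ ν₂ : Fin n → ℕ)
    (h₁ : ν₁ ∈ 𝒩) (j : Fin n) (hj : j ∉ JMult 𝒩 ν₁)
    (hc : (ν₁ + Pi.single j 1) ∈ JCone 𝒩 ν₂) :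
    ∀ k : Fin n, j ≤ k → ν₂ k = ν₁ k + (Pi.single j 1 : Fin n → ℕ) k := by
  classical
  by_contra h
  push_neg at h
  set F : Finset (Fin n) :=
    Finset.univ.filter (fun k => j ≤ k ∧ ν₂ k ≠ ν₁ k + (Pi.single j 1 : Fin n → ℕ) k) with hF
  have hne : F.Nonempty := by
    obtain ⟨k, hk1, hk2⟩ := h
    exact ⟨k, by simp [hF, hk1, hk2]⟩
  obtain ⟨k, hkmem, hkmax⟩ : ∃ k ∈ F, ∀ l ∈ F, l ≤ k :=
    ⟨F.max' hne, F.max'_mem hne, fun l hl => F.le_max' l hl⟩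
  simp only [hF, Finset.mem_filter] at hkmem
  obtain ⟨-, hjk, hneq⟩ := hkmem
  have habove : ∀ l, k < l → ν₂ l = ν₁ l + (Pi.single j 1 : Fin n → ℕ) l := by
    intro l hl
    by_contra hc'
    have : l ∈ F := by simp [hF]; exact ⟨le_trans hjk hl.le, hc'⟩
    exact absurd (hkmax l this) (not_le.mpr hl)
  have hmult : k ∈ JMult 𝒩 ν₂ := by
    by_contra hk'
    exact hneq (hc.2 k hk').symm
  have hlt : ν₂ k < ν₁ k + (Pi.single j 1 : Fin n → ℕ) k := lt_of_le_of_ne (hc.1 k) hneq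
  rcases eq_or_lt_of_le hjk with hjk' | hjk'
  · -- k = j
    subst hjk'
    simp only [JMult, Set.mem_setOf_eq] at hj
    push_neg at hj
    obtain ⟨μ, hμ𝒩, hμag, hμgt⟩ := hj
    have : μ j ≤ ν₂ j := by
      apply hmult μ hμ𝒩
      intro i hi
      rw [habove i hi, Pi.single_eq_of_ne (ne_of_gt hi), hμag i hi]; simp
    rw [Pi.single_eq_same] at hlt
    omega
  · -- j < k
    have : ν₁ k ≤ ν₂ k := by
      apply hmult ν₁ h₁
      intro i hi
      rw [habove i hi, Pi.single_eq_of_ne (ne_of_gt (lt_trans hjk' hi))]; simp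
    rw [Pi.single_eq_of_ne (ne_of_gt hjk')] at hlt
    omega

lemma step_lex {n : ℕ} (𝒩 : Finset (Fin n → ℕ)) (ν₁ ν₂ : Fin n → ℕ)
    (h₁ : ν₁ ∈ 𝒩) (j : Fin n) (hj : j ∉ JMult 𝒩 ν₁)
    (hc : (ν₁ + Pi.single j 1) ∈ JCone 𝒩 ν₂) : ltLex ν₁ ν₂ := by
  have key := step_key 𝒩 ν₁ ν₂ h₁ j hj hc
  refine ⟨j, ?_, ?_⟩
  · rw [key j le_rfl, Pi.single_eq_same]; omega
  · intro l hl
    rw [key l hl.le, Pi.single_eq_of_ne (ne_of_gt hl)]; simp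

lemma ltLex_trans {n : ℕ} {a b c : Fin n → ℕ} (h1 : ltLex a b) (h2 : ltLex b c) :
    ltLex a c := by
  obtain ⟨i, hi, hai⟩ := h1
  obtain ⟨i', hi', hai'⟩ := h2
  rcases lt_trichotomy i i' with h | h | h
  · exact ⟨i', by rw [hai i' h]; exact hi', fun l hl => (hai l (h.trans hl)).trans (hai' l hl)⟩
  · subst h
    exact ⟨i, hi.trans hi', fun l hl => (hai l hl).trans (hai' l hl)⟩
  · exact ⟨i, by rw [← hai' i h]; exact hi, fun l hl => (hai l hl).trans (hai' l (h.trans hl))⟩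

/-- The Janet division is continuous: if `(ν⁽¹⁾, …, ν⁽ᵗ⁾)` is a sequence in a finite
set `𝒩` such that each `ν⁽ᵏ⁺¹⁾` Janet-involutively divides `ν⁽ᵏ⁾ + e_{j_k}` for some
Janet-non-multiplicative index `j_k` of `ν⁽ᵏ⁾`, then the sequence is strictly
increasing with respect to the lexicographic order; in particular its elements are
pairwise distinct. -/
theorem stmt7 {n t : ℕ} (𝒩 : Finset (Fin n → ℕ)) (ν : Fin t → (Fin n → ℕ))
    (hmem : ∀ k, ν k ∈ 𝒩)
    (hstep : ∀ (k : ℕ) (h : k + 1 < t),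
      ∃ j : Fin n, j ∉ JMult 𝒩 (ν ⟨k, by omega⟩) ∧
        (ν ⟨k, by omega⟩ + Pi.single j 1) ∈ JCone 𝒩 (ν ⟨k + 1, h⟩)) :
    (∀ (k : ℕ) (h : k + 1 < t), ltLex (ν ⟨k, by omega⟩) (ν ⟨k + 1, h⟩)) ∧
      Function.Injective ν := by
  have hone : ∀ (k : ℕ) (h : k + 1 < t), ltLex (ν ⟨k, by omega⟩) (ν ⟨k + 1, h⟩) := by
    intro k h
    obtain ⟨j, hj, hc⟩ := hstep k h
    exact step_lex 𝒩 _ _ (hmem _) j hj hc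
  have hchain : ∀ (b a : ℕ) (hb : b < t) (hab : a < b), ltLex (ν ⟨a, by omega⟩) (ν ⟨b, hb⟩) := by
    intro b
    induction b with
    | zero => omega
    | succ m ih =>
      intro a hb hab
      rcases Nat.lt_or_ge a m with h | h
      · exact ltLex_trans (ih a (by omega) h) (hone m hb)
      · have : a = m := by omega
        subst this
        exact hone a hb
  refine ⟨hone, ?_⟩
  intro a b hab
  by_contra hne
  have hirr : ∀ x y : Fin n → ℕ, ltLex x y → x ≠ y := by
    rintro x y ⟨i, hi, -⟩ rfl; omega
  rcases lt_trichotomy a b with h | h | h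
  · exact hirr _ _ (by have := hchain b.val a.val b.isLt h; simpa using this) (by simpa using hab)
  · exact hne (Fin.ext (by exact_mod_cast congrArg Fin.val (congrArg id h)))
  · exact hirr _ _ (by have := hchain a.val b.val a.isLt h; simpa using this) (by simpa using hab.symm)
end

section
/- Every globally defined involutive division on ℕ^n is constructive: if 𝒩 ⊂ ℕ^n is finite, ν ∈ 𝒩 and j is a non-multiplicative index of ν with ν + e_j not in the involutive span of 𝒩, and every proper divisor of ν + e_j of the form μ + e_k (μ ∈ 𝒩, k non-multiplicative for μ) lies in the involutive span of 𝒩, then no ρ in the involutive span of 𝒩 satisfies ν + e_j ∈ involutive cone of ρ with respect to 𝒩 ∪ {ρ}. -/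
/-- Every globally defined involutive division is constructive: if `ν ∈ 𝒩` and `j` is
non-multiplicative for `ν` with `ν + e_j` not in the involutive span of `𝒩`, while
every proper divisor of `ν + e_j` of the form `μ + e_k` (`μ ∈ 𝒩`, `k`
non-multiplicative for `μ`) lies in the involutive span, then no element `ρ` of the
involutive span satisfies `ν + e_j ∈ cone(ρ)`. -/
theorem stmt10 {n : ℕ} (mult : (Fin n → ℕ) → Set (Fin n))
    (hnest : ∀ μ ν : Fin n → ℕ, (rcone (mult μ) μ ∩ rcone (mult ν) ν).Nonempty →
      rcone (mult μ) μ ⊆ rcone (mult ν) ν ∨ rcone (mult ν) ν ⊆ rcone (mult μ) μ)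
    (𝒩 : Finset (Fin n → ℕ)) (ν : Fin n → ℕ) (hν : ν ∈ 𝒩) (j : Fin n)
    (hj : j ∉ mult ν)
    (h1 : (ν + Pi.single j 1) ∉ ⋃ μ ∈ 𝒩, rcone (mult μ) μ)
    (h2 : ∀ μ ∈ 𝒩, ∀ k : Fin n, k ∉ mult μ →
      (∀ i, (μ + Pi.single k 1 : Fin n → ℕ) i ≤ (ν + Pi.single j 1 : Fin n → ℕ) i) →
      (μ + Pi.single k 1) ≠ (ν + Pi.single j 1) →
      (μ + Pi.single k 1) ∈ ⋃ μ' ∈ 𝒩, rcone (mult μ') μ') :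
    ∀ ρ ∈ ⋃ μ ∈ 𝒩, rcone (mult μ) μ, (ν + Pi.single j 1) ∉ rcone (mult ρ) ρ := by
  intro ρ hρ hmem
  obtain ⟨μ, hμ, hρμ⟩ := Set.mem_iUnion₂.mp hρ
  have hrefl : ∀ σ : Fin n → ℕ, σ ∈ rcone (mult σ) σ :=
    fun σ => ⟨fun i => le_refl _, fun i _ => rfl⟩
  have hne : (Set.Nonempty (rcone (mult μ) μ ∩ rcone (mult ρ) ρ)) :=
    ⟨ρ, hρμ, hrefl ρ⟩
  rcases hnest μ ρ hne with h | h
  · have hμρ : μ ∈ rcone (mult ρ) ρ := h (hrefl μ)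
    have : ρ = μ := funext fun i => le_antisymm (hμρ.1 i) (hρμ.1 i)
    exact h1 (Set.mem_iUnion₂.mpr ⟨μ, hμ, this ▸ hmem⟩)
  · exact h1 (Set.mem_iUnion₂.mpr ⟨μ, hμ, h hmem⟩)
end

section
/- Let 𝒩₁ and 𝒩₂ be finite Pommaret bases (possibly weak) of monoid ideals I₁, I₂ ⊆ ℕ^n. Then the set 𝒩 = {μ + ν : μ ∈ 𝒩₁, ν ∈ 𝒩₂} is a weak Pommaret basis of the product ideal I₁·I₂ (the monoid ideal generated by all sums μ + ν with μ ∈ I₁, ν ∈ I₂), and the set 𝒩̂ = {lcm(μ,ν) : μ ∈ 𝒩₁, ν ∈ 𝒩₂} (componentwise maximum) is a weak Pommaret basis of the intersection I₁ ∩ I₂. -/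
namespace Stmt11Aux

variable {n : ℕ}

lemma pmult_add (μ ν : Fin n → ℕ) : PMult (μ + ν) = PMult μ ∩ PMult ν := by
  ext i
  simp only [PMult, Set.mem_setOf_eq, Set.mem_inter_iff, Pi.add_apply, Nat.add_eq_zero]
  exact ⟨fun h => ⟨fun j hj => (h j hj).1, fun j hj => (h j hj).2⟩,
    fun h j hj => ⟨h.1 j hj, h.2 j hj⟩⟩

lemma pmult_max (μ ν : Fin n → ℕ) :
    PMult (fun i => max (μ i) (ν i)) = PMult μ ∩ PMult ν := by
  ext i
  simp only [PMult, Set.mem_setOf_eq, Set.mem_inter_iff, Nat.max_eq_zero_iff]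
  exact ⟨fun h => ⟨fun j hj => (h j hj).1, fun j hj => (h j hj).2⟩,
    fun h j hj => ⟨h.1 j hj, h.2 j hj⟩⟩

lemma pcone_subset {I : Set (Fin n → ℕ)} (hI : ∀ μ ∈ I, ∀ σ : Fin n → ℕ, μ + σ ∈ I)
    {ν : Fin n → ℕ} (hν : ν ∈ I) : PCone ν ⊆ I := by
  intro ρ hρ
  have h : ρ = ν + fun i => ρ i - ν i := by
    funext i
    have := hρ.1 i
    simp only [Pi.add_apply]
    omega
  rw [h]
  exact hI ν hν _

/-- finset version of PMult -/
def Pm (ν : Fin n → ℕ) : Finset (Fin n) := Finset.univ.filter fun i => ∀ j < i, ν j = 0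

lemma mem_Pm {ν : Fin n → ℕ} {i : Fin n} : i ∈ Pm ν ↔ i ∈ PMult ν := by
  simp [Pm, PMult]

/-- the termination measure for the product covering -/
def msr (ρ ν : Fin n → ℕ) : ℕ :=
  (∑ i, ρ i + 1) * (n - (Pm ν).card) + ∑ i ∈ (Pm ν)ᶜ, (ρ i - ν i)

lemma msr_lt (ρ ν ν' : Fin n → ℕ) (hνρ : ∀ i, ν i ≤ ρ i) (k : Fin n)
    (hk : k ∉ PMult ν) (d : ℕ) (hd : 0 < d) (hdk : ν k + d ≤ ρ k)
    (hw : (fun i => ν i + if i = k then d else 0) ∈ PCone ν') :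
    msr ρ ν' < msr ρ ν := by
  set w : Fin n → ℕ := fun i => ν i + if i = k then d else 0 with hwdef
  have hwρ : ∀ i, w i ≤ ρ i := by
    intro i
    by_cases h : i = k
    · subst h; simpa [hwdef] using hdk
    · simpa [hwdef, h] using hνρ i
  have hsub : Pm ν ⊆ Pm ν' := by
    intro i hi
    rw [mem_Pm] at hi ⊢
    intro j hj
    have hjPM : j ∈ PMult ν := fun l hl => hi l (hl.trans hj)
    have hjk : j ≠ k := fun e => hk (e ▸ hjPM)
    have h1 : ν' j ≤ w j := hw.1 j
    have h2 : w j = 0 := by simp [hwdef, hjk, hi j hj]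
    omega
  have hkPm : k ∉ Pm ν := by rw [mem_Pm]; exact hk
  have hcard : (Pm ν).card ≤ (Pm ν').card := Finset.card_le_card hsub
  rcases eq_or_lt_of_le hcard with hc | hc
  · -- equal cards → equal sets
    have hst : Pm ν = Pm ν' := Finset.eq_of_subset_of_card_le hsub hc.ge
    have hsum : ∑ i ∈ (Pm ν')ᶜ, (ρ i - ν' i) < ∑ i ∈ (Pm ν)ᶜ, (ρ i - ν i) := by
      rw [← hst]
      apply Finset.sum_lt_sum
      · intro i hi
        have hiν' : i ∉ PMult ν' := by
          rw [← mem_Pm, ← hst]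
          simpa using hi
        have h1 : w i = ν' i := hw.2 i hiν'
        have : ν i ≤ w i := by simp [hwdef]
        omega
      · refine ⟨k, by simpa using hkPm, ?_⟩
        have hkν' : k ∉ PMult ν' := by
          rw [← mem_Pm, ← hst]; simpa using hkPm
        have h1 : w k = ν' k := hw.2 k hkν'
        have h2 : w k = ν k + d := by simp [hwdef]
        omega
    unfold msr
    rw [hc]
    omega
  · -- card strictly increased
    have hcn : (Pm ν').card ≤ n := by
      simpa using Finset.card_le_univ (Pm ν')
    have hT' : ∑ i ∈ (Pm ν')ᶜ, (ρ i - ν' i) ≤ ∑ i, ρ i := by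
      calc ∑ i ∈ (Pm ν')ᶜ, (ρ i - ν' i) ≤ ∑ i ∈ (Pm ν')ᶜ, ρ i :=
            Finset.sum_le_sum fun i _ => Nat.sub_le _ _
        _ ≤ ∑ i, ρ i := Finset.sum_le_sum_of_subset (Finset.subset_univ _)
    unfold msr
    set S := ∑ i, ρ i
    have h1 : n - (Pm ν').card + 1 ≤ n - (Pm ν).card := by omega
    calc (S + 1) * (n - (Pm ν').card) + ∑ i ∈ (Pm ν')ᶜ, (ρ i - ν' i)
        ≤ (S + 1) * (n - (Pm ν').card) + S := by omega
      _ < (S + 1) * (n - (Pm ν').card + 1) := by ring_nf; omega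
      _ ≤ (S + 1) * (n - (Pm ν).card) := Nat.mul_le_mul_left _ h1
      _ ≤ (S + 1) * (n - (Pm ν).card) + ∑ i ∈ (Pm ν)ᶜ, (ρ i - ν i) := Nat.le_add_right _ _

end Stmt11Aux

namespace Stmt11Aux

/-- Main covering lemma for the product ideal. -/
lemma cover_prod {n : ℕ} (I₁ I₂ : Set (Fin n → ℕ))
    (hI₁ : ∀ μ ∈ I₁, ∀ σ : Fin n → ℕ, μ + σ ∈ I₁)
    (hI₂ : ∀ μ ∈ I₂, ∀ σ : Fin n → ℕ, μ + σ ∈ I₂)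
    (𝒩₁ 𝒩₂ : Finset (Fin n → ℕ))
    (h₁ : (↑𝒩₁ : Set (Fin n → ℕ)) ⊆ I₁ ∧ (⋃ ν ∈ 𝒩₁, PCone ν) = I₁)
    (h₂ : (↑𝒩₂ : Set (Fin n → ℕ)) ⊆ I₂ ∧ (⋃ ν ∈ 𝒩₂, PCone ν) = I₂)
    (ρ : Fin n → ℕ) :
    ∀ m : ℕ, ∀ ν ∈ 𝒩₂, msr ρ ν < m → ∀ α ∈ I₁, ρ = α + ν →
      ∃ μ ∈ 𝒩₁, ∃ ν' ∈ 𝒩₂, ρ ∈ PCone (μ + ν') := by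
  intro m
  induction m with
  | zero => intro ν _ h; omega
  | succ m ih =>
    intro ν hν hm α hα hρ
    -- cover α by some μ ∈ 𝒩₁
    have hα' : α ∈ ⋃ μ ∈ 𝒩₁, PCone μ := h₁.2 ▸ hα
    simp only [Set.mem_iUnion] at hα'
    obtain ⟨μ, hμ, hαμ⟩ := hα'
    by_cases hgood : ∀ i, i ∉ PMult ν → α i = μ i
    · -- done
      refine ⟨μ, hμ, ν, hν, ?_, ?_⟩
      · intro i
        have := hαμ.1 i
        simp only [hρ, Pi.add_apply]
        omega
      · intro i hi
        rw [pmult_add] at hi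
        simp only [Set.mem_inter_iff, not_and_or] at hi
        have hαi : α i = μ i := by
          rcases hi with hi | hi
          · exact hαμ.2 i hi
          · exact hgood i hi
        simp only [hρ, Pi.add_apply, hαi]
    · -- move the excess at a bad index to the second factor
      push_neg at hgood
      obtain ⟨k, hk, hne⟩ := hgood
      have hkμ : k ∈ PMult μ := by
        by_contra hc
        exact hne (hαμ.2 k hc)
      have hle : μ k ≤ α k := hαμ.1 k
      set d : ℕ := α k - μ k with hddef
      have hd : 0 < d := by omega
      set w : Fin n → ℕ := fun i => ν i + if i = k then d else 0 with hwdef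
      have hwI : w ∈ I₂ := by
        have : w = ν + fun i => if i = k then d else 0 := rfl
        rw [this]
        exact hI₂ ν (h₂.1 hν) _
      have hw' : w ∈ ⋃ ν' ∈ 𝒩₂, PCone ν' := h₂.2 ▸ hwI
      simp only [Set.mem_iUnion] at hw'
      obtain ⟨ν', hν', hwν'⟩ := hw'
      -- new α
      set αm : Fin n → ℕ := fun i => α i - if i = k then d else 0 with hαmdef
      have hαmμ : αm ∈ PCone μ := by
        constructor
        · intro i
          have := hαμ.1 i
          by_cases h : i = k
          · subst h; simp [hαmdef]; omega
          · simpa [hαmdef, h] using this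
        · intro i hi
          have hik : i ≠ k := fun e => hi (e ▸ hkμ)
          have := hαμ.2 i hi
          simpa [hαmdef, hik] using this
      have hαmI : αm ∈ I₁ := pcone_subset hI₁ (h₁.1 hμ) hαmμ
      set α' : Fin n → ℕ := αm + fun i => w i - ν' i with hα'def
      have hα'I : α' ∈ I₁ := hI₁ αm hαmI _
      have hρ' : ρ = α' + ν' := by
        funext i
        have h1 : ν' i ≤ w i := hwν'.1 i
        have h2 : ρ i = α i + ν i := by rw [hρ]; rfl
        by_cases h : i = k
        · subst h
          simp only [hα'def, hαmdef, hwdef, Pi.add_apply, if_pos rfl, ite_true] at h1 ⊢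
          omega
        · simp only [hα'def, hαmdef, hwdef, Pi.add_apply, if_neg h] at h1 ⊢
          omega
      -- measure decreases
      have hνρ : ∀ i, ν i ≤ ρ i := by
        intro i
        rw [hρ]
        simp only [Pi.add_apply]
        omega
      have hdk : ν k + d ≤ ρ k := by
        have : ρ k = α k + ν k := by rw [hρ]; rfl
        omega
      have hlt : msr ρ ν' < msr ρ ν := msr_lt ρ ν ν' hνρ k hk d hd hdk hwν'
      exact ih ν' hν' (by omega) α' hα'I hρ'

end Stmt11Aux

/-- If `𝒩₁`, `𝒩₂` are finite (possibly weak) Pommaret bases of the monoid ideals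
`I₁`, `I₂`, then `{μ + ν}` is a weak Pommaret basis of the product ideal `I₁·I₂` and
`{lcm(μ,ν)}` (componentwise maxima) is a weak Pommaret basis of `I₁ ∩ I₂`. -/
theorem stmt11 {n : ℕ} (I₁ I₂ : Set (Fin n → ℕ))
    (hI₁ : ∀ μ ∈ I₁, ∀ σ : Fin n → ℕ, μ + σ ∈ I₁)
    (hI₂ : ∀ μ ∈ I₂, ∀ σ : Fin n → ℕ, μ + σ ∈ I₂)
    (𝒩₁ 𝒩₂ : Finset (Fin n → ℕ))
    (h₁ : (↑𝒩₁ : Set (Fin n → ℕ)) ⊆ I₁ ∧ (⋃ ν ∈ 𝒩₁, PCone ν) = I₁)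
    (h₂ : (↑𝒩₂ : Set (Fin n → ℕ)) ⊆ I₂ ∧ (⋃ ν ∈ 𝒩₂, PCone ν) = I₂) :
    let N : Set (Fin n → ℕ) := {ρ | ∃ μ ∈ 𝒩₁, ∃ ν ∈ 𝒩₂, ρ = μ + ν}
    let Iprod : Set (Fin n → ℕ) := {ρ | ∃ μ ∈ I₁, ∃ ν ∈ I₂, ρ = μ + ν}
    let Nhat : Set (Fin n → ℕ) :=
      {ρ | ∃ μ ∈ 𝒩₁, ∃ ν ∈ 𝒩₂, ρ = fun i => max (μ i) (ν i)}
    (N.Finite ∧ N ⊆ Iprod ∧ (⋃ ρ ∈ N, PCone ρ) = Iprod) ∧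
    (Nhat.Finite ∧ Nhat ⊆ I₁ ∩ I₂ ∧ (⋃ ρ ∈ Nhat, PCone ρ) = I₁ ∩ I₂) := by
  intro N Iprod Nhat
  have hNfin : N.Finite := by
    apply Set.Finite.subset (Finset.finite_toSet ((𝒩₁ ×ˢ 𝒩₂).image fun p => p.1 + p.2))
    rintro ρ ⟨μ, hμ, ν, hν, rfl⟩
    simp only [Finset.coe_image, Set.mem_image, Finset.mem_coe, Finset.mem_product]
    exact ⟨(μ, ν), ⟨hμ, hν⟩, rfl⟩
  have hNhatfin : Nhat.Finite := by
    apply Set.Finite.subset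
      (Finset.finite_toSet ((𝒩₁ ×ˢ 𝒩₂).image fun p => fun i => max (p.1 i) (p.2 i)))
    rintro ρ ⟨μ, hμ, ν, hν, rfl⟩
    simp only [Finset.coe_image, Set.mem_image, Finset.mem_coe, Finset.mem_product]
    exact ⟨(μ, ν), ⟨hμ, hν⟩, rfl⟩
  have hNsub : N ⊆ Iprod := by
    rintro ρ ⟨μ, hμ, ν, hν, rfl⟩
    exact ⟨μ, h₁.1 hμ, ν, h₂.1 hν, rfl⟩
  have hNhatsub : Nhat ⊆ I₁ ∩ I₂ := by
    rintro ρ ⟨μ, hμ, ν, hν, rfl⟩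
    constructor
    · have h : (fun i => max (μ i) (ν i)) = μ + fun i => max (μ i) (ν i) - μ i := by
        funext i; simp only [Pi.add_apply]; omega
      rw [h]; exact hI₁ μ (h₁.1 hμ) _
    · have h : (fun i => max (μ i) (ν i)) = ν + fun i => max (μ i) (ν i) - ν i := by
        funext i; simp only [Pi.add_apply]; omega
      rw [h]; exact hI₂ ν (h₂.1 hν) _
  refine ⟨⟨hNfin, hNsub, ?_⟩, hNhatfin, hNhatsub, ?_⟩
  · -- product covering
    apply Set.Subset.antisymm
    · -- cones ⊆ Iprod
      simp only [Set.iUnion_subset_iff]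
      rintro ρ ⟨μ, hμ, ν, hν, rfl⟩
      intro x hx
      have hxI : x ∈ PCone (μ + ν) := hx
      have h : x = (μ + fun i => x i - (μ i + ν i)) + ν := by
        funext i
        have := hxI.1 i
        simp only [Pi.add_apply] at this ⊢
        omega
      exact ⟨_, hI₁ μ (h₁.1 hμ) _, ν, h₂.1 hν, h⟩
    · -- Iprod ⊆ cones
      rintro ρ ⟨a, ha, b, hb, rfl⟩
      -- cover b
      have hb' : b ∈ ⋃ ν ∈ 𝒩₂, PCone ν := h₂.2 ▸ hb
      simp only [Set.mem_iUnion] at hb'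
      obtain ⟨ν₀, hν₀, hbν₀⟩ := hb'
      have hα₀ : (a + fun i => b i - ν₀ i) ∈ I₁ := hI₁ a ha _
      have hd : a + b = (a + fun i => b i - ν₀ i) + ν₀ := by
        funext i
        have := hbν₀.1 i
        simp only [Pi.add_apply]
        omega
      obtain ⟨μ, hμ, ν', hν', hc⟩ :=
        Stmt11Aux.cover_prod I₁ I₂ hI₁ hI₂ 𝒩₁ 𝒩₂ h₁ h₂ (a + b)
          (Stmt11Aux.msr (a + b) ν₀ + 1) ν₀ hν₀ (by omega) _ hα₀ hd
      simp only [Set.mem_iUnion]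
      exact ⟨μ + ν', ⟨μ, hμ, ν', hν', rfl⟩, hc⟩
  · -- intersection covering
    apply Set.Subset.antisymm
    · simp only [Set.iUnion_subset_iff]
      rintro ρ ⟨μ, hμ, ν, hν, rfl⟩
      intro x hx
      have hξ : (fun i => max (μ i) (ν i)) ∈ I₁ ∩ I₂ := hNhatsub ⟨μ, hμ, ν, hν, rfl⟩
      exact ⟨Stmt11Aux.pcone_subset hI₁ hξ.1 hx, Stmt11Aux.pcone_subset hI₂ hξ.2 hx⟩
    · rintro ρ ⟨hρ1, hρ2⟩
      have h1' : ρ ∈ ⋃ μ ∈ 𝒩₁, PCone μ := h₁.2 ▸ hρ1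
      have h2' : ρ ∈ ⋃ ν ∈ 𝒩₂, PCone ν := h₂.2 ▸ hρ2
      simp only [Set.mem_iUnion] at h1' h2'
      obtain ⟨μ, hμ, hρμ⟩ := h1'
      obtain ⟨ν, hν, hρν⟩ := h2'
      simp only [Set.mem_iUnion]
      refine ⟨fun i => max (μ i) (ν i), ⟨μ, hμ, ν, hν, rfl⟩, ?_, ?_⟩
      · intro i
        exact max_le (hρμ.1 i) (hρν.1 i)
      · intro i hi
        rw [Stmt11Aux.pmult_max] at hi
        simp only [Set.mem_inter_iff, not_and_or] at hi
        show ρ i = max (μ i) (ν i)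
        rcases hi with hi | hi
        · have h1 : ρ i = μ i := hρμ.2 i hi
          have h2 : ν i ≤ ρ i := hρν.1 i
          omega
        · have h1 : ρ i = ν i := hρν.2 i hi
          have h2 : μ i ≤ ρ i := hρμ.1 i
          omega
end

section
/- In a polynomial algebra (P,⋆,≺) of solvable type over a field, the maps ρ_μ and coefficients r_{μν} arising from the commutation relations x^μ ⋆ r = ρ_μ(r)x^μ + (lower terms) and x^μ ⋆ x^ν = r_{μν} x^{μ+ν} + (lower terms) satisfy ρ_μ(ρ_ν(r))·r_{μν} = r_{μν}·ρ_{μ+ν}(r) and ρ_μ(r_{νλ})·r_{μ,ν+λ} = r_{μν}·r_{μ+ν,λ} for all multi indices μ,ν,λ and all ring elements r; moreover each ρ_μ is a ring endomorphism. -/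
/-- Polynomials in `n` variables over `R`, represented by their coefficient families
indexed by multi indices. -/
abbrev SPoly (R : Type) [CommRing R] (n : ℕ) := (Fin n → ℕ) →₀ R

/-- The leading exponent of a polynomial with respect to a term order (the maximal
element of its support; `0` for the zero polynomial). -/
noncomputable def lexp {R : Type} [CommRing R] {n : ℕ} (ord : LinearOrder (Fin n → ℕ))
    (f : SPoly R n) : Fin n → ℕ :=
  WithBot.unbotD 0 (@Finset.max _ ord f.support)

/-- A polynomial algebra of solvable type `(P, ⋆, ≺)`: the `R`-module `R[x₁,…,xₙ]`
equipped with an associative unital multiplication `⋆` such that `r ⋆ f = r • f` for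
scalars, and with respect to a term order `≺` (a monoid order) the leading exponent of
`x^μ ⋆ x^ν` is `μ + ν` and of `x^μ ⋆ r` (for `r ≠ 0`) is `μ`. -/
structure SolvMul (R : Type) [CommRing R] (n : ℕ) (ord : LinearOrder (Fin n → ℕ)) where
  star : SPoly R n → SPoly R n → SPoly R n
  zero_min : ∀ μ : Fin n → ℕ, ord.le 0 μ
  add_compat : ∀ μ ν σ : Fin n → ℕ, ord.lt μ ν → ord.lt (μ + σ) (ν + σ)
  star_assoc : ∀ f g h : SPoly R n, star (star f g) h = star f (star g h)
  star_add : ∀ f g h : SPoly R n, star f (g + h) = star f g + star f h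
  add_star : ∀ f g h : SPoly R n, star (f + g) h = star f h + star g h
  one_star : ∀ f : SPoly R n, star (Finsupp.single 0 1) f = f
  star_one : ∀ f : SPoly R n, star f (Finsupp.single 0 1) = f
  scalar_star : ∀ (r : R) (f : SPoly R n), star (Finsupp.single 0 r) f = r • f
  mono_mono : ∀ μ ν : Fin n → ℕ,
    star (Finsupp.single μ 1) (Finsupp.single ν 1) ≠ 0 ∧
      lexp ord (star (Finsupp.single μ 1) (Finsupp.single ν 1)) = μ + ν
  mono_scalar : ∀ (μ : Fin n → ℕ) (r : R), r ≠ 0 →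
    star (Finsupp.single μ 1) (Finsupp.single 0 r) ≠ 0 ∧
      lexp ord (star (Finsupp.single μ 1) (Finsupp.single 0 r)) = μ

/-!
Everything follows from one formula for leading coefficients: if all exponents of `f` are
`≼ κ` and all exponents of `g` are `≼ τ`, then the coefficient of `x^(κ+τ)` in `f ⋆ g` is
`f_κ · ρ_κ(g_τ) · r_{κτ}`, because `x^α ⋆ b x^β = (x^α ⋆ b) ⋆ x^β` only involves exponents
`≼ α + β` and the term order is compatible with addition. Reading off the top coefficient
of both sides of `x^μ ⋆ (x^ν ⋆ r) = (x^μ ⋆ x^ν) ⋆ r`, `x^μ ⋆ (x^ν ⋆ x^λ) = (x^μ ⋆ x^ν) ⋆ x^λ`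
and `x^μ ⋆ (r ⋆ s) = (x^μ ⋆ r) ⋆ s` gives the two identities and the multiplicativity of
`ρ_μ`; additivity and `ρ_μ(1) = 1` come from distributivity and `f ⋆ 1 = f`.
-/

open Finsupp

theorem Finsupp.map_mem_of_mem_supported {α R N : Type*} [Semiring R] [AddCommMonoid N]
    (φ : (α →₀ R) →+ N) {s : Set α} {S : AddSubmonoid N}
    (h : ∀ a ∈ s, ∀ r, φ (single a r) ∈ S) {f : α →₀ R} (hf : f ∈ supported R R s) :
    φ f ∈ S := by
  rw [← f.sum_single, map_finsuppSum]
  exact sum_mem fun a ha => h a ((mem_supported R f).1 hf ha) _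

section LeadingExponent

variable {R : Type} [CommRing R] {n : ℕ} (ord : LinearOrder (Fin n → ℕ))

local notation:50 a:50 " ≼ " b:50 => ord.le a b
local notation:50 a:50 " ≺ " b:50 => ord.lt a b

-- The analogue of `Polynomial.degreeLE`.
variable (R) in
def lexpLE (κ : Fin n → ℕ) : Submodule R (SPoly R n) :=
  supported R R {σ | σ ≼ κ}

variable (R) in
def lexpLT (κ : Fin n → ℕ) : Submodule R (SPoly R n) :=
  supported R R {σ | σ ≺ κ}

theorem mem_lexpLE_lexp (f : SPoly R n) : f ∈ lexpLE R ord (lexp ord f) := by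
  refine (mem_supported R f).2 fun σ hσ => ?_
  obtain ⟨m, hm⟩ := @Finset.max_of_mem _ ord _ _ hσ
  rw [Set.mem_ofPred_eq, lexp, hm, WithBot.unbotD_coe]
  exact @Finset.le_max_of_eq _ ord _ _ _ hσ hm

variable {ord}

theorem lexpLE_mono {κ κ' : Fin n → ℕ} (h : κ ≼ κ') :
    lexpLE R ord κ ≤ lexpLE R ord κ' :=
  supported_mono fun _ hσ => ord.le_trans _ _ _ hσ h

theorem lexpLE_le_lexpLT {κ κ' : Fin n → ℕ} (h : κ ≺ κ') :
    lexpLE R ord κ ≤ lexpLT R ord κ' :=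
  supported_mono fun _ hσ => @lt_of_le_of_lt _ ord.toPreorder _ _ _ hσ h

theorem coeff_eq_zero_of_mem_lexpLT {f : SPoly R n} {κ : Fin n → ℕ}
    (hf : f ∈ lexpLT R ord κ) : f κ = 0 :=
  (mem_supported' R f).1 hf κ (@lt_irrefl _ ord.toPreorder κ)

theorem sub_single_mem_lexpLT {f : SPoly R n} {κ : Fin n → ℕ} (hf : f ∈ lexpLE R ord κ) :
    f - single κ (f κ) ∈ lexpLT R ord κ := by
  refine (mem_supported' R _).2 fun σ hσ => ?_
  rcases eq_or_ne σ κ with rfl | hne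
  · simp
  · have hfσ : f σ = 0 := (mem_supported' R f).1 hf σ fun hle =>
      hσ (@lt_of_le_of_ne _ ord.toPartialOrder _ _ hle hne)
    simp [hfσ, hne.symm]

end LeadingExponent

namespace SolvMul

variable {R : Type} [CommRing R] {n : ℕ} {ord : LinearOrder (Fin n → ℕ)}

local notation:50 a:50 " ≼ " b:50 => ord.le a b
local notation:50 a:50 " ≺ " b:50 => ord.lt a b

section Order

variable {a b c d : Fin n → ℕ}

theorem add_le_add_right (A : SolvMul R n ord) (h : a ≼ b) (c : Fin n → ℕ) :
    a + c ≼ b + c := by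
  rcases eq_or_ne a b with rfl | hne
  · exact ord.le_refl _
  · exact @le_of_lt _ ord.toPreorder _ _
      (A.add_compat a b c (@lt_of_le_of_ne _ ord.toPartialOrder _ _ h hne))

theorem add_le_add_left (A : SolvMul R n ord) (c : Fin n → ℕ) (h : a ≼ b) :
    c + a ≼ c + b := by
  simpa only [add_comm c] using A.add_le_add_right h c

theorem add_lt_add_left (A : SolvMul R n ord) (c : Fin n → ℕ) (h : a ≺ b) :
    c + a ≺ c + b := by
  simpa only [add_comm c] using A.add_compat a b c h

theorem add_lt_add_of_lt_of_le (A : SolvMul R n ord) (hab : a ≺ b) (hcd : c ≼ d) :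
    a + c ≺ b + d :=
  @lt_of_lt_of_le _ ord.toPreorder _ _ _ (A.add_compat a b c hab) (A.add_le_add_left b hcd)

theorem add_lt_add_of_le_of_lt (A : SolvMul R n ord) (hab : a ≼ b) (hcd : c ≺ d) :
    a + c ≺ b + d :=
  @lt_of_le_of_lt _ ord.toPreorder _ _ _ (A.add_le_add_right hab c) (A.add_lt_add_left b hcd)

end Order

variable (A : SolvMul R n ord)

noncomputable def starLeft (g : SPoly R n) : SPoly R n →+ SPoly R n :=
  AddMonoidHom.mk' (A.star · g) fun f f' => A.add_star f f' g

noncomputable def starRight (f : SPoly R n) : SPoly R n →+ SPoly R n :=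
  AddMonoidHom.mk' (A.star f) (A.star_add f)

theorem star_zero (f : SPoly R n) : A.star f 0 = 0 :=
  map_zero (A.starRight f)

theorem single_star (μ : Fin n → ℕ) (c : R) (f : SPoly R n) :
    A.star (single μ c) f = c • A.star (single μ 1) f := by
  rw [← A.scalar_star, ← A.star_assoc, A.scalar_star, smul_single, smul_eq_mul, mul_one]

theorem star_single (f : SPoly R n) (ν : Fin n → ℕ) (b : R) :
    A.star f (single ν b) = A.star (A.star f (single 0 b)) (single ν 1) := by
  rw [A.star_assoc, A.scalar_star, smul_single, smul_eq_mul, mul_one]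

section Support

variable {f g : SPoly R n} {s t : Set (Fin n → ℕ)} {S : Submodule R (SPoly R n)}
  {κ τ : Fin n → ℕ}

theorem star_mem_of_forall_mono_star (hf : f ∈ supported R R s)
    (h : ∀ α ∈ s, A.star (single α 1) g ∈ S) : A.star f g ∈ S := by
  refine map_mem_of_mem_supported (S := S.toAddSubmonoid) (A.starLeft g)
    (fun α hα c => ?_) hf
  change A.star (single α c) g ∈ S
  rw [A.single_star]
  exact S.smul_mem c (h α hα)

theorem star_mem_of_forall_star_single (hg : g ∈ supported R R t)
    (h : ∀ β ∈ t, ∀ b, A.star f (single β b) ∈ S) : A.star f g ∈ S :=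
  map_mem_of_mem_supported (S := S.toAddSubmonoid) (A.starRight f) h hg

theorem mono_star_mono_mem (μ ν : Fin n → ℕ) :
    A.star (single μ 1) (single ν 1) ∈ lexpLE R ord (μ + ν) :=
  (A.mono_mono μ ν).2 ▸ mem_lexpLE_lexp ord _

theorem mono_star_scalar_mem (μ : Fin n → ℕ) (r : R) :
    A.star (single μ 1) (single 0 r) ∈ lexpLE R ord μ := by
  rcases eq_or_ne r 0 with rfl | hr
  · rw [single_zero, star_zero]
    exact zero_mem _
  · simpa only [(A.mono_scalar μ r hr).2] using
      mem_lexpLE_lexp ord (A.star (single μ 1) (single 0 r))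

theorem mono_star_single_mem (μ ν : Fin n → ℕ) (b : R) :
    A.star (single μ 1) (single ν b) ∈ lexpLE R ord (μ + ν) := by
  rw [star_single]
  exact A.star_mem_of_forall_mono_star (A.mono_star_scalar_mem μ b) fun γ hγ =>
    lexpLE_mono (A.add_le_add_right hγ ν) (A.mono_star_mono_mem γ ν)

theorem star_mem_of_supported (hf : f ∈ supported R R s) (hg : g ∈ supported R R t)
    (h : ∀ α ∈ s, ∀ β ∈ t, lexpLE R ord (α + β) ≤ S) : A.star f g ∈ S :=
  A.star_mem_of_forall_mono_star hf fun α hα => A.star_mem_of_forall_star_single hg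
    fun β hβ b => h α hα β hβ (A.mono_star_single_mem α β b)

-- Every other pair of terms of `f` and `g` has its product strictly below `κ + τ`.
theorem coeff_star_eq_coeff_single_star (hf : f ∈ lexpLE R ord κ) (hg : g ∈ lexpLE R ord τ) :
    A.star f g (κ + τ) = f κ * A.star (single κ 1) (single τ (g τ)) (κ + τ) := by
  have hf₀ : single κ (f κ) ∈ lexpLE R ord κ := single_mem_supported R _ (ord.le_refl κ)
  have hlow₁ : A.star (f - single κ (f κ)) g ∈ lexpLT R ord (κ + τ) :=
    A.star_mem_of_supported (sub_single_mem_lexpLT hf) hg fun _ hα _ hβ =>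
      lexpLE_le_lexpLT (A.add_lt_add_of_lt_of_le hα hβ)
  have hlow₂ : A.star (single κ (f κ)) (g - single τ (g τ)) ∈ lexpLT R ord (κ + τ) :=
    A.star_mem_of_supported hf₀ (sub_single_mem_lexpLT hg) fun _ hα _ hβ =>
      lexpLE_le_lexpLT (A.add_lt_add_of_le_of_lt hα hβ)
  have hsplit : A.star f g = A.star (single κ (f κ)) (single τ (g τ)) +
      A.star (single κ (f κ)) (g - single τ (g τ)) + A.star (f - single κ (f κ)) g := by
    rw [← A.star_add, add_sub_cancel, ← A.add_star, add_sub_cancel]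
  rw [hsplit, Finsupp.add_apply, Finsupp.add_apply, coeff_eq_zero_of_mem_lexpLT hlow₁,
    coeff_eq_zero_of_mem_lexpLT hlow₂, A.single_star, Finsupp.smul_apply, smul_eq_mul,
    add_zero, add_zero]

end Support

-- `rho μ` and `mulCoeff μ ν` are the paper's `ρ_μ` and `r_{μν}`.
noncomputable def rho (μ : Fin n → ℕ) (r : R) : R :=
  A.star (single μ 1) (single 0 r) μ

noncomputable def mulCoeff (μ ν : Fin n → ℕ) : R :=
  A.star (single μ 1) (single ν 1) (μ + ν)

theorem mono_star_single_coeff (μ ν : Fin n → ℕ) (b : R) :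
    A.star (single μ 1) (single ν b) (μ + ν) = A.rho μ b * A.mulCoeff μ ν := by
  rw [star_single, A.coeff_star_eq_coeff_single_star (A.mono_star_scalar_mem μ b)
    (single_mem_supported R 1 (ord.le_refl ν)), single_eq_same]
  rfl

theorem coeff_star {f g : SPoly R n} {κ τ : Fin n → ℕ} (hf : f ∈ lexpLE R ord κ)
    (hg : g ∈ lexpLE R ord τ) :
    A.star f g (κ + τ) = f κ * A.rho κ (g τ) * A.mulCoeff κ τ := by
  rw [A.coeff_star_eq_coeff_single_star hf hg, mono_star_single_coeff, mul_assoc]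

theorem rho_one (μ : Fin n → ℕ) : A.rho μ 1 = 1 := by
  rw [rho, A.star_one, single_eq_same]

theorem mulCoeff_zero_right (μ : Fin n → ℕ) : A.mulCoeff μ 0 = 1 := by
  rw [mulCoeff, A.star_one, add_zero, single_eq_same]

theorem rho_add (μ : Fin n → ℕ) (r s : R) : A.rho μ (r + s) = A.rho μ r + A.rho μ s := by
  rw [rho, single_add, A.star_add, Finsupp.add_apply]
  rfl

theorem rho_mul (μ : Fin n → ℕ) (r s : R) : A.rho μ (r * s) = A.rho μ r * A.rho μ s := by
  have hrs : single 0 (r * s) = A.star (single 0 r) (single 0 s) := by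
    rw [A.scalar_star, smul_single, smul_eq_mul]
  calc A.rho μ (r * s)
      = A.star (A.star (single μ 1) (single 0 r)) (single 0 s) (μ + 0) := by
        rw [add_zero, A.star_assoc, ← hrs]
        rfl
    _ = A.rho μ r * A.rho μ s := by
        rw [A.coeff_star (A.mono_star_scalar_mem μ r)
            (single_mem_supported R s (ord.le_refl 0)),
          single_eq_same, mulCoeff_zero_right, mul_one]
        rfl

theorem rho_rho_mul_mulCoeff (μ ν : Fin n → ℕ) (r : R) :
    A.rho μ (A.rho ν r) * A.mulCoeff μ ν = A.mulCoeff μ ν * A.rho (μ + ν) r := by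
  calc A.rho μ (A.rho ν r) * A.mulCoeff μ ν
      = A.star (single μ 1) (A.star (single ν 1) (single 0 r)) (μ + ν) := by
        rw [A.coeff_star (single_mem_supported R 1 (ord.le_refl μ))
            (A.mono_star_scalar_mem ν r),
          single_eq_same, one_mul]
        rfl
    _ = A.star (A.star (single μ 1) (single ν 1)) (single 0 r) (μ + ν + 0) := by
        rw [A.star_assoc, add_zero]
    _ = A.mulCoeff μ ν * A.rho (μ + ν) r := by
        rw [A.coeff_star (A.mono_star_mono_mem μ ν) (single_mem_supported R r (ord.le_refl 0)),
          single_eq_same, mulCoeff_zero_right, mul_one]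
        rfl

theorem rho_mulCoeff_mul_mulCoeff (μ ν lam : Fin n → ℕ) :
    A.rho μ (A.mulCoeff ν lam) * A.mulCoeff μ (ν + lam) =
      A.mulCoeff μ ν * A.mulCoeff (μ + ν) lam := by
  calc A.rho μ (A.mulCoeff ν lam) * A.mulCoeff μ (ν + lam)
      = A.star (single μ 1) (A.star (single ν 1) (single lam 1)) (μ + (ν + lam)) := by
        rw [A.coeff_star (single_mem_supported R 1 (ord.le_refl μ))
            (A.mono_star_mono_mem ν lam),
          single_eq_same, one_mul]
        rfl
    _ = A.star (A.star (single μ 1) (single ν 1)) (single lam 1) (μ + ν + lam) := by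
        rw [A.star_assoc, add_assoc]
    _ = A.mulCoeff μ ν * A.mulCoeff (μ + ν) lam := by
        rw [A.coeff_star (A.mono_star_mono_mem μ ν)
            (single_mem_supported R 1 (ord.le_refl lam)),
          single_eq_same, rho_one, mul_one]
        rfl

end SolvMul

/-- In a polynomial algebra of solvable type over a field, the maps `ρ_μ` and the
coefficients `r_{μν}` arising from the commutation relations
`x^μ ⋆ r = ρ_μ(r)·x^μ + …` and `x^μ ⋆ x^ν = r_{μν}·x^{μ+ν} + …` satisfy
`ρ_μ(ρ_ν(r))·r_{μν} = r_{μν}·ρ_{μ+ν}(r)` and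
`ρ_μ(r_{νλ})·r_{μ,ν+λ} = r_{μν}·r_{μ+ν,λ}`; moreover each `ρ_μ` is a ring
endomorphism. -/
theorem stmt12 {K : Type} [Field K] {n : ℕ} (ord : LinearOrder (Fin n → ℕ))
    (A : SolvMul K n ord)
    (ρ : (Fin n → ℕ) → K → K)
    (hρ : ∀ (μ : Fin n → ℕ) (r : K),
      ρ μ r = (A.star (Finsupp.single μ 1) (Finsupp.single 0 r)) μ)
    (rc : (Fin n → ℕ) → (Fin n → ℕ) → K)
    (hrc : ∀ μ ν : Fin n → ℕ,
      rc μ ν = (A.star (Finsupp.single μ 1) (Finsupp.single ν 1)) (μ + ν)) :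
    (∀ (μ ν : Fin n → ℕ) (r : K), ρ μ (ρ ν r) * rc μ ν = rc μ ν * ρ (μ + ν) r) ∧
    (∀ μ ν lam : Fin n → ℕ, ρ μ (rc ν lam) * rc μ (ν + lam) = rc μ ν * rc (μ + ν) lam) ∧
    (∀ μ : Fin n → ℕ, ρ μ 1 = 1 ∧
      ∀ r s : K, ρ μ (r + s) = ρ μ r + ρ μ s ∧ ρ μ (r * s) = ρ μ r * ρ μ s) := by
  obtain rfl : ρ = A.rho := funext fun μ => funext (hρ μ)
  obtain rfl : rc = A.mulCoeff := funext fun μ => funext (hrc μ)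
  exact ⟨A.rho_rho_mul_mulCoeff, A.rho_mulCoeff_mul_mulCoeff,
    fun μ => ⟨A.rho_one μ, fun r s => ⟨A.rho_add μ r s, A.rho_mul μ r s⟩⟩⟩
end

section
/- A monic, involutively autoreduced, minimal involutive basis of a nonzero left ideal I in a polynomial algebra of solvable type over a field, with respect to a fixed involutive division L and term order ≺, is unique if it exists: if ℋ₁ and ℋ₂ are two such bases of I then ℋ₁ = ℋ₂. -/
/-- The set of leading exponents of a finite set of polynomials. -/
noncomputable def leadSet {R : Type} [CommRing R] {n : ℕ} (ord : LinearOrder (Fin n → ℕ))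
    (ℋ : Finset (SPoly R n)) : Finset (Fin n → ℕ) :=
  ℋ.image (lexp ord)

/-- The monoid ideal of leading exponents of (the nonzero elements of) a set of
polynomials. -/
def leadExps {R : Type} [CommRing R] {n : ℕ} (ord : LinearOrder (Fin n → ℕ))
    (I : Set (SPoly R n)) : Set (Fin n → ℕ) :=
  {μ | ∃ f ∈ I, f ≠ 0 ∧ lexp ord f = μ}

/-- `P` gives an involutive standard representation of `f` with respect to `ℋ`:
`f = Σ_{h∈ℋ} P_h ⋆ h`, every `P_h` only involves the multiplicative variables of `h`,
and `le(P_h ⋆ h) ⪯ le(f)`. -/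
def IsInvRep {R : Type} [CommRing R] {n : ℕ} (ord : LinearOrder (Fin n → ℕ))
    (A : SolvMul R n ord) (L : InvDiv n) (ℋ : Finset (SPoly R n)) (f : SPoly R n)
    (P : {h // h ∈ ℋ} → SPoly R n) : Prop :=
  f = ∑ h ∈ ℋ.attach, A.star (P h) h.1 ∧
    ∀ h : {h // h ∈ ℋ},
      (∀ μ ∈ (P h).support, ∀ i ∉ L.mult (leadSet ord ℋ) (lexp ord h.1), μ i = 0) ∧
      ord.le (lexp ord (A.star (P h) h.1)) (lexp ord f)

/-- `ℋ` is a weak involutive basis of the left ideal `I`: `ℋ ⊂ I \ {0}` and the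
leading exponents of `ℋ` form a weak involutive basis of the monoid ideal of leading
exponents of `I`. -/
def WeakInvBasis {R : Type} [CommRing R] {n : ℕ} (ord : LinearOrder (Fin n → ℕ))
    (L : InvDiv n) (I : Set (SPoly R n)) (ℋ : Finset (SPoly R n)) : Prop :=
  (↑ℋ : Set (SPoly R n)) ⊆ I ∧ (0 : SPoly R n) ∉ ℋ ∧
    (⋃ μ ∈ leadSet ord ℋ, rcone (L.mult (leadSet ord ℋ) μ) μ) = leadExps ord I

/-- `ℋ` is a strong involutive basis of `I`: a weak one whose involutive cones are
pairwise disjoint and whose elements have pairwise distinct leading exponents. -/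
def StrongInvBasis {R : Type} [CommRing R] {n : ℕ} (ord : LinearOrder (Fin n → ℕ))
    (L : InvDiv n) (I : Set (SPoly R n)) (ℋ : Finset (SPoly R n)) : Prop :=
  WeakInvBasis ord L I ℋ ∧ Set.InjOn (lexp ord) (↑ℋ : Set (SPoly R n)) ∧
    ∀ μ ∈ leadSet ord ℋ, ∀ ν ∈ leadSet ord ℋ, μ ≠ ν →
      Disjoint (rcone (L.mult (leadSet ord ℋ) μ) μ) (rcone (L.mult (leadSet ord ℋ) ν) ν)

/-- `ℋ` is a minimal involutive basis: its set of leading exponents is contained in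
every (strong) involutive basis of the monoid ideal of leading exponents of `I`. -/
def MinimalInvBasis {R : Type} [CommRing R] {n : ℕ} (ord : LinearOrder (Fin n → ℕ))
    (L : InvDiv n) (I : Set (SPoly R n)) (ℋ : Finset (SPoly R n)) : Prop :=
  ∀ 𝒩' : Finset (Fin n → ℕ),
    ((↑𝒩' : Set (Fin n → ℕ)) ⊆ leadExps ord I ∧
      (⋃ μ ∈ 𝒩', rcone (L.mult 𝒩' μ) μ) = leadExps ord I ∧
      ∀ μ ∈ 𝒩', ∀ ν ∈ 𝒩', μ ≠ ν →
        Disjoint (rcone (L.mult 𝒩' μ) μ) (rcone (L.mult 𝒩' ν) ν)) →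
    leadSet ord ℋ ⊆ 𝒩'

/-!
Minimality pins down the leading exponents: each minimal basis's set of leading exponents lies
in every involutive basis of `le(I)`, in particular in the other's, so the two sets coincide.
Now let `h₁ ∈ ℋ₁` and `h₂ ∈ ℋ₂` be monic with the same leading exponent. If `h₁ ≠ h₂`, then
`g = h₁ - h₂` is a nonzero element of `I`, and `le(g)` is a term of `h₁` or of `h₂` strictly
below their common leading exponent. As `le(g) ∈ le(I)`, it lies in the involutive cone of some
element of the corresponding basis, which autoreduction forbids.
-/

section LeadingExponent

variable {R : Type} [CommRing R] {n : ℕ} (ord : LinearOrder (Fin n → ℕ))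

lemma lexp_eq_max' {f : SPoly R n} (hf : f.support.Nonempty) :
    lexp ord f = @Finset.max' _ ord f.support hf := by
  rw [lexp, ← @Finset.coe_max' _ ord _ hf]
  rfl

lemma lexp_mem_support {f : SPoly R n} (hf : f ≠ 0) : lexp ord f ∈ f.support := by
  rw [lexp_eq_max' ord (Finsupp.support_nonempty_iff.mpr hf)]
  exact @Finset.max'_mem _ ord _ _

lemma le_lexp_of_mem_support {f : SPoly R n} {μ : Fin n → ℕ} (hμ : μ ∈ f.support) :
    ord.le μ (lexp ord f) := by
  rw [lexp_eq_max' ord ⟨μ, hμ⟩]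
  exact @Finset.le_max' _ ord _ μ hμ

end LeadingExponent

lemma SolvMul.le_of_mem_rcone {R : Type} [CommRing R] {n : ℕ} {ord : LinearOrder (Fin n → ℕ)}
    (A : SolvMul R n ord) {N : Set (Fin n)} {ν μ : Fin n → ℕ} (hμ : μ ∈ rcone N ν) :
    ord.le ν μ := by
  obtain ⟨σ, rfl⟩ : ∃ σ, μ = ν + σ :=
    ⟨μ - ν, funext fun i => (Nat.add_sub_cancel' (hμ.1 i)).symm⟩
  by_cases hσ : σ = 0
  · rw [hσ, add_zero]
    exact ord.le_refl ν
  · have hlt := A.add_compat 0 σ ν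
      (@lt_of_le_of_ne _ ord.toPartialOrder _ _ (A.zero_min σ) (Ne.symm hσ))
    rw [zero_add, add_comm] at hlt
    exact @le_of_lt _ ord.toPreorder _ _ hlt

lemma StrongInvBasis.isInvBasis_leadSet {R : Type} [CommRing R] {n : ℕ}
    {ord : LinearOrder (Fin n → ℕ)} {L : InvDiv n} {I : Set (SPoly R n)} {ℋ : Finset (SPoly R n)}
    (hb : StrongInvBasis ord L I ℋ) :
    (↑(leadSet ord ℋ) : Set (Fin n → ℕ)) ⊆ leadExps ord I ∧
      (⋃ μ ∈ leadSet ord ℋ, rcone (L.mult (leadSet ord ℋ) μ) μ) = leadExps ord I ∧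
      ∀ μ ∈ leadSet ord ℋ, ∀ ν ∈ leadSet ord ℋ, μ ≠ ν →
        Disjoint (rcone (L.mult (leadSet ord ℋ) μ) μ) (rcone (L.mult (leadSet ord ℋ) ν) ν) := by
  refine ⟨?_, hb.1.2.2, hb.2.2⟩
  rintro _ hμ
  obtain ⟨h, hh, rfl⟩ := Finset.mem_image.mp hμ
  exact ⟨h, hb.1.1 hh, fun h0 => hb.1.2.1 (h0 ▸ hh), rfl⟩

lemma MinimalInvBasis.leadSet_eq {R : Type} [CommRing R] {n : ℕ}
    {ord : LinearOrder (Fin n → ℕ)} {L : InvDiv n} {I : Set (SPoly R n)}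
    {ℋ₁ ℋ₂ : Finset (SPoly R n)} (hb₁ : StrongInvBasis ord L I ℋ₁)
    (hb₂ : StrongInvBasis ord L I ℋ₂) (hmin₁ : MinimalInvBasis ord L I ℋ₁)
    (hmin₂ : MinimalInvBasis ord L I ℋ₂) : leadSet ord ℋ₁ = leadSet ord ℋ₂ :=
  (hmin₁ _ hb₂.isInvBasis_leadSet).antisymm (hmin₂ _ hb₁.isInvBasis_leadSet)

section Autoreduced

variable {R : Type} [CommRing R] {n : ℕ} {ord : LinearOrder (Fin n → ℕ)}
  {L : InvDiv n} {I : Set (SPoly R n)}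

lemma WeakInvBasis.eq_lexp_of_mem_support (A : SolvMul R n ord) {ℋ : Finset (SPoly R n)}
    (hb : WeakInvBasis ord L I ℋ)
    (hauto : ∀ h ∈ ℋ, ∀ μ ∈ h.support, ∀ h' ∈ ℋ, h' ≠ h →
      μ ∉ rcone (L.mult (leadSet ord ℋ) (lexp ord h')) (lexp ord h'))
    {h : SPoly R n} (hh : h ∈ ℋ) {μ : Fin n → ℕ} (hμ : μ ∈ h.support)
    (hμI : μ ∈ leadExps ord I) : μ = lexp ord h := by
  rw [← hb.2.2] at hμI
  obtain ⟨_, hν, hμν⟩ := Set.mem_iUnion₂.mp hμI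
  obtain ⟨h', hh', rfl⟩ := Finset.mem_image.mp hν
  obtain rfl : h' = h := by_contra fun hne => hauto h hh μ hμ h' hh' hne hμν
  exact ord.le_antisymm _ _ (le_lexp_of_mem_support ord hμ) (A.le_of_mem_rcone hμν)

lemma WeakInvBasis.eq_of_lexp_eq (A : SolvMul R n ord) {ℋ₁ ℋ₂ : Finset (SPoly R n)}
    (hIsub : ∀ f ∈ I, ∀ g ∈ I, f - g ∈ I)
    (hb₁ : WeakInvBasis ord L I ℋ₁) (hb₂ : WeakInvBasis ord L I ℋ₂)
    (hmonic₁ : ∀ h ∈ ℋ₁, h (lexp ord h) = 1)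
    (hmonic₂ : ∀ h ∈ ℋ₂, h (lexp ord h) = 1)
    (hauto₁ : ∀ h ∈ ℋ₁, ∀ μ ∈ h.support, ∀ h' ∈ ℋ₁, h' ≠ h →
      μ ∉ rcone (L.mult (leadSet ord ℋ₁) (lexp ord h')) (lexp ord h'))
    (hauto₂ : ∀ h ∈ ℋ₂, ∀ μ ∈ h.support, ∀ h' ∈ ℋ₂, h' ≠ h →
      μ ∉ rcone (L.mult (leadSet ord ℋ₂) (lexp ord h')) (lexp ord h'))
    {h₁ h₂ : SPoly R n} (hh₁ : h₁ ∈ ℋ₁) (hh₂ : h₂ ∈ ℋ₂) (hlexp : lexp ord h₁ = lexp ord h₂) :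
    h₁ = h₂ := by
  by_contra hne
  set g := h₁ - h₂
  have hg : g ≠ 0 := sub_ne_zero.mpr hne
  have hgI : lexp ord g ∈ leadExps ord I := ⟨g, hIsub _ (hb₁.1 hh₁) _ (hb₂.1 hh₂), hg, rfl⟩
  have hlexp_g : lexp ord g = lexp ord h₁ := by
    rcases Finset.mem_union.mp (Finsupp.support_sub (lexp_mem_support ord hg)) with hs | hs
    · exact hb₁.eq_lexp_of_mem_support A hauto₁ hh₁ hs hgI
    · exact (hb₂.eq_lexp_of_mem_support A hauto₂ hh₂ hs hgI).trans hlexp.symm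
  have hcancel : g (lexp ord g) = 0 := by
    rw [Finsupp.sub_apply, hlexp_g, hmonic₁ h₁ hh₁, hlexp, hmonic₂ h₂ hh₂, sub_self]
  exact Finsupp.mem_support_iff.mp (lexp_mem_support ord hg) hcancel

end Autoreduced

lemma Finset.subset_of_image_subset_image {α β : Type*} [DecidableEq β] {f : α → β}
    {s t : Finset α} (hst : s.image f ⊆ t.image f) (heq : ∀ a ∈ s, ∀ b ∈ t, f a = f b → a = b) :
    s ⊆ t := by
  intro a ha
  obtain ⟨b, hb, hab⟩ := Finset.mem_image.mp (hst (Finset.mem_image_of_mem f ha))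
  rwa [heq a ha b hb hab.symm]

theorem stmt18_general {K : Type} [Field K] {n : ℕ} (ord : LinearOrder (Fin n → ℕ))
    (A : SolvMul K n ord) (L : InvDiv n) (I : Set (SPoly K n))
    (hIadd : ∀ f ∈ I, ∀ g ∈ I, f + g ∈ I)
    (hIneg : ∀ f ∈ I, -f ∈ I)
    (ℋ₁ ℋ₂ : Finset (SPoly K n))
    (hb₁ : StrongInvBasis ord L I ℋ₁) (hb₂ : StrongInvBasis ord L I ℋ₂)
    (hmonic₁ : ∀ h ∈ ℋ₁, h (lexp ord h) = 1)
    (hmonic₂ : ∀ h ∈ ℋ₂, h (lexp ord h) = 1)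
    (hauto₁ : ∀ h ∈ ℋ₁, ∀ μ ∈ h.support, ∀ h' ∈ ℋ₁, h' ≠ h →
      μ ∉ rcone (L.mult (leadSet ord ℋ₁) (lexp ord h')) (lexp ord h'))
    (hauto₂ : ∀ h ∈ ℋ₂, ∀ μ ∈ h.support, ∀ h' ∈ ℋ₂, h' ≠ h →
      μ ∉ rcone (L.mult (leadSet ord ℋ₂) (lexp ord h')) (lexp ord h'))
    (hmin₁ : MinimalInvBasis ord L I ℋ₁) (hmin₂ : MinimalInvBasis ord L I ℋ₂) :
    ℋ₁ = ℋ₂ := by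
  have hIsub : ∀ f ∈ I, ∀ g ∈ I, f - g ∈ I := fun f hf g hg => by
    simpa only [sub_eq_add_neg] using hIadd f hf (-g) (hIneg g hg)
  have hlead : leadSet ord ℋ₁ = leadSet ord ℋ₂ := hmin₁.leadSet_eq hb₁ hb₂ hmin₂
  refine (Finset.subset_of_image_subset_image hlead.le fun h₁ hh₁ h₂ hh₂ => ?_).antisymm
    (Finset.subset_of_image_subset_image hlead.ge fun h₂ hh₂ h₁ hh₁ => ?_)
  · exact hb₁.1.eq_of_lexp_eq A hIsub hb₂.1 hmonic₁ hmonic₂ hauto₁ hauto₂ hh₁ hh₂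
  · exact hb₂.1.eq_of_lexp_eq A hIsub hb₁.1 hmonic₂ hmonic₁ hauto₂ hauto₁ hh₂ hh₁

/-- Uniqueness of the monic, involutively autoreduced, minimal involutive basis of a
nonzero left ideal `I` of a polynomial algebra of solvable type over a field: two
such bases coincide. -/
theorem stmt18 {K : Type} [Field K] {n : ℕ} (ord : LinearOrder (Fin n → ℕ))
    (A : SolvMul K n ord) (L : InvDiv n) (I : Set (SPoly K n))
    (hI0 : (0 : SPoly K n) ∈ I)
    (hIadd : ∀ f ∈ I, ∀ g ∈ I, f + g ∈ I)
    (hIneg : ∀ f ∈ I, -f ∈ I)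
    (hImul : ∀ f ∈ I, ∀ p : SPoly K n, A.star p f ∈ I)
    (hInz : I ≠ {0})
    (ℋ₁ ℋ₂ : Finset (SPoly K n))
    (hb₁ : StrongInvBasis ord L I ℋ₁) (hb₂ : StrongInvBasis ord L I ℋ₂)
    (hmonic₁ : ∀ h ∈ ℋ₁, h (lexp ord h) = 1)
    (hmonic₂ : ∀ h ∈ ℋ₂, h (lexp ord h) = 1)
    (hauto₁ : ∀ h ∈ ℋ₁, ∀ μ ∈ h.support, ∀ h' ∈ ℋ₁, h' ≠ h →
      μ ∉ rcone (L.mult (leadSet ord ℋ₁) (lexp ord h')) (lexp ord h'))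
    (hauto₂ : ∀ h ∈ ℋ₂, ∀ μ ∈ h.support, ∀ h' ∈ ℋ₂, h' ≠ h →
      μ ∉ rcone (L.mult (leadSet ord ℋ₂) (lexp ord h')) (lexp ord h'))
    (hmin₁ : MinimalInvBasis ord L I ℋ₁) (hmin₂ : MinimalInvBasis ord L I ℋ₂) :
    ℋ₁ = ℋ₂ :=
  stmt18_general ord A L I hIadd hIneg ℋ₁ ℋ₂ hb₁ hb₂ hmonic₁ hmonic₂ hauto₁ hauto₂ hmin₁ hmin₂
end

section
/- Let ≺ be a degree compatible term order on the monomials of k[x_1,...,x_n] such that for every homogeneous polynomial f, the leading term of f lies in the ideal ⟨x_1,...,x_k⟩ if and only if f itself lies in ⟨x_1,...,x_k⟩ (for every k). Then ≺ coincides with the degree reverse lexicographic order, defined by x^μ ≺ x^ν iff |μ| < |ν|, or |μ| = |ν| and the first nonvanishing entry of μ − ν is positive. -/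
/-!
Let `μ ≠ ν` have the same degree and let `i` be the first index with `μ i ≠ ν i`, say
`ν i < μ i`. Split `μ = (μ ⊓ ν) + μ'` and `ν = (μ ⊓ ν) + ν'` with `μ' = μ - ν`, `ν' = ν - μ`.
Then `x_i` divides `x^μ'`, while `x^ν'` involves none of `x_0, …, x_i`. If `ν' ≼ μ'`, the leading
term of the homogeneous binomial `x^μ' + x^ν'` lies in `⟨x_0, …, x_i⟩`, hence so does the
binomial, and then so does `x^ν'`, since the ideal is spanned by monomials: absurd. So `μ' ≺ ν'`,
and `μ ≺ ν` by multiplicativity. Since degree reverse lexicographic comparison is total, the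
inclusion of its strict relation in `≺` already forces equality.
-/

open MvPolynomial

/-- The leading exponent of a multivariate polynomial with respect to a term order:
the maximal element of its support (`0` for the zero polynomial). -/
noncomputable def lexpMv {K : Type} [Field K] {n : ℕ} (ord : LinearOrder (Fin n →₀ ℕ))
    (f : MvPolynomial (Fin n) K) : Fin n →₀ ℕ :=
  WithBot.unbotD 0 (@Finset.max _ ord f.support)

theorem lt_iff_of_imp_of_total {α : Type*} [order : Preorder α] {r : α → α → Prop}
    (hr : ∀ a b, r a b → a < b) (htotal : ∀ a b, a ≠ b → r a b ∨ r b a) (a b : α) :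
    a < b ↔ r a b :=
  ⟨fun hab => (htotal a b hab.ne).resolve_right fun hba => (hr b a hba).not_gt hab, hr a b⟩

theorem add_lt_add_left_of_le_add {M : Type*} [Add M] [IsLeftCancelAdd M]
    [order : PartialOrder M] (hmul : ∀ a b c : M, a ≤ b → c + a ≤ c + b) {a b : M} (h : a < b)
    (c : M) : c + a < c + b :=
  (hmul a b c h.le).lt_of_ne fun hc => h.ne (add_left_cancel hc)

def DegRevLexLt {σ : Type*} [Fintype σ] [LT σ] (μ ν : σ →₀ ℕ) : Prop :=
  (∑ i, μ i) < (∑ i, ν i) ∨ ((∑ i, μ i) = (∑ i, ν i) ∧ ∃ i, ν i < μ i ∧ ∀ j < i, μ j = ν j)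

theorem exists_first_gt_iff_toLex_lt {ι β : Type*} [LT ι] [LT β] {μ ν : ι → β} :
    (∃ i, ν i < μ i ∧ ∀ j < i, μ j = ν j) ↔ toLex ν < toLex μ := by
  show _ ↔ ∃ i, (∀ j < i, ν j = μ j) ∧ ν i < μ i
  simp only [eq_comm (a := μ _), and_comm]

theorem degRevLexLt_total {σ : Type*} [Fintype σ] [LinearOrder σ] [WellFoundedLT σ]
    {μ ν : σ →₀ ℕ} (hne : μ ≠ ν) : DegRevLexLt μ ν ∨ DegRevLexLt ν μ := by
  simp only [DegRevLexLt, exists_first_gt_iff_toLex_lt]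
  rcases lt_trichotomy (∑ i, μ i) (∑ i, ν i) with h | h | h
  · exact .inl (.inl h)
  · have hlex : toLex ⇑ν ≠ toLex ⇑μ := fun h' => hne (DFunLike.coe_injective h').symm
    exact (lt_or_gt_of_ne hlex).imp (fun h' => .inr ⟨h, h'⟩) fun h' => .inr ⟨h.symm, h'⟩
  · exact .inr (.inl h)

theorem lexpMv_eq_of_forall_le {K : Type} [Field K] {n : ℕ} (ord : LinearOrder (Fin n →₀ ℕ))
    {f : MvPolynomial (Fin n) K} {μ : Fin n →₀ ℕ} (hμ : μ ∈ f.support)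
    (hle : ∀ ν ∈ f.support, ord.le ν μ) : lexpMv ord f = μ := by
  obtain ⟨m, hm⟩ := @Finset.max_of_mem _ ord _ _ hμ
  have hmμ : m = μ := ord.le_antisymm _ _ (hle m (@Finset.mem_of_max _ ord _ _ hm))
    (@Finset.le_max_of_eq _ ord _ _ _ hμ hm)
  simp [lexpMv, hm, hmμ]

theorem support_monomial_one_add_monomial_one {R σ : Type*} [CommSemiring R] [Nontrivial R]
    [DecidableEq σ] {μ ν : σ →₀ ℕ} (hne : μ ≠ ν) :
    (monomial μ (1 : R) + monomial ν 1).support = {μ, ν} := by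
  ext m
  by_cases hμ : m = μ <;> by_cases hν : m = ν <;> simp_all [coeff_monomial, eq_comm]

theorem setOf_exists_X_eq_image {R σ : Type*} [CommSemiring R] (P : σ → Prop) :
    {p : MvPolynomial σ R | ∃ i, P i ∧ p = X i} = X '' {i | P i} := by
  ext p
  simp [eq_comm]

def LeadingTermMemSpanXIff (K : Type) [Field K] {n : ℕ} (ord : LinearOrder (Fin n →₀ ℕ)) :
    Prop :=
  ∀ (f : MvPolynomial (Fin n) K) (d : ℕ), f.IsHomogeneous d → f ≠ 0 → ∀ k : ℕ,
    (monomial (lexpMv ord f) (f.coeff (lexpMv ord f)) ∈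
        Ideal.span {p : MvPolynomial (Fin n) K | ∃ i : Fin n, (i : ℕ) < k ∧ p = X i}
      ↔ f ∈ Ideal.span {p : MvPolynomial (Fin n) K | ∃ i : Fin n, (i : ℕ) < k ∧ p = X i})

namespace LeadingTermMemSpanXIff

variable {K : Type} [Field K] {n : ℕ} {ord : LinearOrder (Fin n →₀ ℕ)}

theorem lt_of_apply_ne_zero_of_forall_le_eq_zero (hmain : LeadingTermMemSpanXIff K ord)
    {μ ν : Fin n →₀ ℕ} {i : Fin n} (hdeg : μ.degree = ν.degree) (hi : μ i ≠ 0)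
    (hν : ∀ j ≤ i, ν j = 0) : ord.lt μ ν := by
  have hne : μ ≠ ν := fun h => hi (h ▸ hν i le_rfl)
  by_contra hlt
  set f : MvPolynomial (Fin n) K := monomial μ 1 + monomial ν 1
  have hsupp : f.support = {μ, ν} := support_monomial_one_add_monomial_one hne
  have hlexp : lexpMv ord f = μ := by
    refine lexpMv_eq_of_forall_le ord (by simp [hsupp]) fun m hm => ?_
    rcases Finset.mem_insert.mp (hsupp ▸ hm) with rfl | hm
    · exact ord.le_refl m
    · exact (Finset.mem_singleton.mp hm) ▸ (@not_lt _ ord _ _).mp hlt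
  have hcoeff : f.coeff μ = 1 := by simp [f, coeff_monomial, hne.symm]
  have hhom : f.IsHomogeneous μ.degree :=
    (isHomogeneous_monomial _ rfl).add (isHomogeneous_monomial _ hdeg.symm)
  have hf : f ≠ 0 := fun h => by simp [h] at hcoeff
  have hlead : monomial μ (1 : K) ∈ Ideal.span (X '' {j : Fin n | (j : ℕ) < i + 1}) := by
    rw [mem_ideal_span_X_image]
    intro m hm
    rw [Finset.mem_singleton.mp (support_monomial_subset hm)]
    exact ⟨i, Nat.lt_succ_self _, hi⟩
  have hfmem := (hmain f _ hhom hf (i + 1)).mp (by rwa [hlexp, hcoeff, setOf_exists_X_eq_image])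
  rw [setOf_exists_X_eq_image, mem_ideal_span_X_image] at hfmem
  obtain ⟨j, hj, hνj⟩ := hfmem ν (by simp [hsupp])
  exact hνj (hν j (Nat.lt_succ_iff.mp hj))

theorem lt_of_degree_eq_of_lex (hmain : LeadingTermMemSpanXIff K ord)
    (hmul : ∀ μ ν σ : Fin n →₀ ℕ, ord.le μ ν → ord.le (σ + μ) (σ + ν))
    {μ ν : Fin n →₀ ℕ} {i : Fin n} (hdeg : μ.degree = ν.degree) (hi : ν i < μ i)
    (hfirst : ∀ j < i, μ j = ν j) : ord.lt μ ν := by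
  have hμ : μ ⊓ ν + (μ - ν) = μ := by
    ext j
    simp only [Finsupp.coe_add, Finsupp.coe_tsub, Pi.add_apply, Finsupp.inf_apply, Pi.sub_apply]
    omega
  have hν : μ ⊓ ν + (ν - μ) = ν := by
    ext j
    simp only [Finsupp.coe_add, Finsupp.coe_tsub, Pi.add_apply, Finsupp.inf_apply, Pi.sub_apply]
    omega
  have hdeg' : (μ - ν).degree = (ν - μ).degree := by
    have hμdeg := congrArg Finsupp.degree hμ
    have hνdeg := congrArg Finsupp.degree hν
    rw [map_add] at hμdeg hνdeg
    omega
  have hpos : (μ - ν) i ≠ 0 := by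
    simp only [Finsupp.coe_tsub, Pi.sub_apply]
    omega
  have hzero : ∀ j ≤ i, (ν - μ) j = 0 := by
    intro j hj
    simp only [Finsupp.coe_tsub, Pi.sub_apply]
    rcases hj.lt_or_eq with hj | rfl
    · simp [hfirst j hj]
    · omega
  have hlt : ord.lt (μ - ν) (ν - μ) :=
    hmain.lt_of_apply_ne_zero_of_forall_le_eq_zero hdeg' hpos hzero
  simpa only [hμ, hν] using
    add_lt_add_left_of_le_add (order := ord.toPartialOrder) hmul hlt (μ ⊓ ν)

end LeadingTermMemSpanXIff

theorem stmt19_general {K : Type} [Field K] {n : ℕ} (ord : LinearOrder (Fin n →₀ ℕ))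
    (hmul : ∀ μ ν σ : Fin n →₀ ℕ, ord.le μ ν → ord.le (σ + μ) (σ + ν))
    (hdeg : ∀ μ ν : Fin n →₀ ℕ, (∑ i, μ i) < (∑ i, ν i) → ord.lt μ ν)
    (hmain : ∀ (f : MvPolynomial (Fin n) K) (d : ℕ), f.IsHomogeneous d → f ≠ 0 →
      ∀ k : ℕ,
        ((MvPolynomial.monomial (lexpMv ord f)) (f.coeff (lexpMv ord f)) ∈
            Ideal.span {p : MvPolynomial (Fin n) K | ∃ i : Fin n, (i : ℕ) < k ∧ p = X i}
          ↔ f ∈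
            Ideal.span {p : MvPolynomial (Fin n) K | ∃ i : Fin n, (i : ℕ) < k ∧ p = X i})) :
    ∀ μ ν : Fin n →₀ ℕ, ord.lt μ ν ↔
      ((∑ i, μ i) < (∑ i, ν i) ∨
        ((∑ i, μ i) = (∑ i, ν i) ∧ ∃ i : Fin n, ν i < μ i ∧ ∀ j < i, μ j = ν j)) := by
  refine lt_iff_of_imp_of_total (order := ord.toPreorder) (r := DegRevLexLt) ?_
    fun _ _ => degRevLexLt_total
  rintro μ ν (hlt | ⟨hsum, i, hi, hfirst⟩)
  · exact hdeg μ ν hlt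
  · rw [← Finsupp.degree_eq_sum, ← Finsupp.degree_eq_sum] at hsum
    exact LeadingTermMemSpanXIff.lt_of_degree_eq_of_lex hmain hmul hsum hi hfirst

/-- A degree compatible term order `≺` on the monomials of `k[x₁,…,xₙ]` such that for
every homogeneous polynomial `f` and every `k` the leading term of `f` lies in
`⟨x₁,…,x_k⟩` iff `f` does, coincides with the degree reverse lexicographic order:
`x^μ ≺ x^ν` iff `|μ| < |ν|`, or `|μ| = |ν|` and the first nonvanishing entry of
`μ − ν` is positive. -/
theorem stmt19 {K : Type} [Field K] {n : ℕ} (ord : LinearOrder (Fin n →₀ ℕ))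
    (hzero : ∀ μ : Fin n →₀ ℕ, ord.le 0 μ)
    (hmul : ∀ μ ν σ : Fin n →₀ ℕ, ord.le μ ν → ord.le (σ + μ) (σ + ν))
    (hdeg : ∀ μ ν : Fin n →₀ ℕ, (∑ i, μ i) < (∑ i, ν i) → ord.lt μ ν)
    (hmain : ∀ (f : MvPolynomial (Fin n) K) (d : ℕ), f.IsHomogeneous d → f ≠ 0 →
      ∀ k : ℕ,
        ((MvPolynomial.monomial (lexpMv ord f)) (f.coeff (lexpMv ord f)) ∈
            Ideal.span {p : MvPolynomial (Fin n) K | ∃ i : Fin n, (i : ℕ) < k ∧ p = X i}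
          ↔ f ∈
            Ideal.span {p : MvPolynomial (Fin n) K | ∃ i : Fin n, (i : ℕ) < k ∧ p = X i})) :
    ∀ μ ν : Fin n →₀ ℕ, ord.lt μ ν ↔
      ((∑ i, μ i) < (∑ i, ν i) ∨
        ((∑ i, μ i) = (∑ i, ν i) ∧ ∃ i : Fin n, ν i < μ i ∧ ∀ j < i, μ j = ν j)) :=
  stmt19_general ord hmul hdeg hmain
end
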